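/- arXiv:1709.00778 — 8 statements merged into one kernel-verified Lean document; each statement's English description precedes it below -/
import Mathlib

section
/- Let p be a prime, let k ≥ 1, and let n ≥ 1. If r and s are integers with r ≥ k, s ≥ k, and r ≡ s (mod p^{k-1}·(p-1)), then A^r_n ≡ A^s_n (mod p^k). -/
/-- The descent set of a permutation `π` of `{1,…,n}` (realized as `Equiv.Perm (Fin n)`),
as a subset of `[n-1] = {1,…,n-1}`: those positions `i` with `π_i > π_{i+1}`. -/
def descSet (n : ℕ) (π : Equiv.Perm (Fin n)) : Finset ℕ :=
  (Finset.Icc 1 (n - 1)).filter fun i =>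
    ∀ (h1 : i - 1 < n) (h2 : i < n), π ⟨i, h2⟩ < π ⟨i - 1, h1⟩

/-- The descent set statistic `β_n(S)`: the number of permutations of `{1,…,n}`
with descent set exactly `S`. -/
def descStat (n : ℕ) (S : Finset ℕ) : ℕ :=
  (Finset.univ.filter fun π : Equiv.Perm (Fin n) => descSet n π = S).card

/-- `A^r_n = Σ_{S ⊆ [n-1]} β_n(S)^r`. -/
def powSumDes (r n : ℕ) : ℕ :=
  ∑ S ∈ (Finset.Icc 1 (n - 1)).powerset, descStat n S ^ r

lemma aux_pow_modEq (p k a r s : ℕ) (hp : p.Prime) (hk : 1 ≤ k)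
    (hr : k ≤ r) (hs : k ≤ s) (hrs : r ≡ s [MOD p ^ (k - 1) * (p - 1)]) :
    a ^ r ≡ a ^ s [MOD p ^ k] := by
  wlog h : s ≤ r generalizing r s
  · exact (this s r hs hr hrs.symm (le_of_not_ge h)).symm
  by_cases hpa : p ∣ a
  · have h1 : p ^ k ∣ a ^ r := (pow_dvd_pow_of_dvd hpa k).trans (pow_dvd_pow a hr)
    have h2 : p ^ k ∣ a ^ s := (pow_dvd_pow_of_dvd hpa k).trans (pow_dvd_pow a hs)
    calc a ^ r ≡ 0 [MOD p ^ k] := (Nat.modEq_zero_iff_dvd).mpr h1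
      _ ≡ a ^ s [MOD p ^ k] := ((Nat.modEq_zero_iff_dvd).mpr h2).symm
  · have hcop : a.Coprime (p ^ k) :=
      ((hp.coprime_iff_not_dvd.mpr hpa).symm).pow_right k
    have heuler : a ^ (p ^ (k - 1) * (p - 1)) ≡ 1 [MOD p ^ k] := by
      have := Nat.ModEq.pow_totient hcop
      rwa [Nat.totient_prime_pow hp (lt_of_lt_of_le one_pos hk)] at this
    set d := p ^ (k - 1) * (p - 1) with hd
    have hdvd : d ∣ r - s := (Nat.modEq_iff_dvd' h).mp hrs.symm
    obtain ⟨m, hm⟩ := hdvd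
    have hrsum : r = s + d * m := by omega
    calc a ^ r = a ^ s * (a ^ d) ^ m := by rw [hrsum, pow_add, pow_mul]
      _ ≡ a ^ s * 1 ^ m [MOD p ^ k] := Nat.ModEq.mul_left _ (heuler.pow m)
      _ = a ^ s := by ring

theorem stmt0 (p k n r s : ℕ) (hp : p.Prime) (hk : 1 ≤ k) (hn : 1 ≤ n)
    (hr : k ≤ r) (hs : k ≤ s) (hrs : r ≡ s [MOD p ^ (k - 1) * (p - 1)]) :
    powSumDes r n ≡ powSumDes s n [MOD p ^ k] := by
  unfold powSumDes
  show _ % _ = _ % _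
  rw [Finset.sum_nat_mod, Finset.sum_nat_mod _ _ fun S => descStat n S ^ s]
  congr 1
  exact Finset.sum_congr rfl fun S _ =>
    aux_pow_modEq p k (descStat n S) r s hp hk hr hs hrs
end

section
/- Let n ≥ 1 and k ≥ 3. If r and s are integers with r ≥ k, s ≥ k, and r ≡ s (mod 2^{k-2}), then A^r_n ≡ A^s_n (mod 2^k). -/
theorem Int.two_pow_add_two_dvd_pow_two_pow_sub_one {b : ℤ} (hb : Odd b) {j : ℕ} (hj : 1 ≤ j) :
    2 ^ (j + 2) ∣ b ^ 2 ^ j - 1 := by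
  induction j, hj using Nat.le_induction with
  | base => simpa using Int.eight_dvd_sq_sub_one_of_odd hb
  | succ j _ ih =>
    have h2 : (2 : ℤ) ∣ b ^ 2 ^ j + 1 := hb.pow.add_one.two_dvd
    calc (2 : ℤ) ^ (j + 1 + 2) = 2 ^ (j + 2) * 2 := by ring
      _ ∣ (b ^ 2 ^ j - 1) * (b ^ 2 ^ j + 1) := mul_dvd_mul ih h2
      _ = b ^ 2 ^ (j + 1) - 1 := by ring

theorem Nat.pow_two_pow_modEq_one_of_odd {b : ℕ} (hb : Odd b) {j : ℕ} (hj : 1 ≤ j) :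
    b ^ 2 ^ j ≡ 1 [MOD 2 ^ (j + 2)] := by
  refine (Nat.modEq_iff_dvd.2 ?_).symm
  push_cast
  exact Int.two_pow_add_two_dvd_pow_two_pow_sub_one (by exact_mod_cast hb) hj

theorem Nat.pow_modEq_pow_of_modEq_two_pow (b : ℕ) {k r s : ℕ} (hk : 3 ≤ k) (hr : k ≤ r)
    (hs : k ≤ s) (hrs : r ≡ s [MOD 2 ^ (k - 2)]) : b ^ r ≡ b ^ s [MOD 2 ^ k] := by
  wlog hle : r ≤ s generalizing r s
  · exact (this hs hr hrs.symm (le_of_not_ge hle)).symm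
  rcases Nat.even_or_odd b with heven | hodd
  · have hvanish {m : ℕ} (hm : k ≤ m) : b ^ m ≡ 0 [MOD 2 ^ k] :=
      Nat.modEq_zero_iff_dvd.2 ((pow_dvd_pow_of_dvd heven.two_dvd k).trans (pow_dvd_pow b hm))
    exact (hvanish hr).trans (hvanish hs).symm
  · obtain ⟨t, ht⟩ := (Nat.modEq_iff_dvd' hle).1 hrs
    have hone : b ^ 2 ^ (k - 2) ≡ 1 [MOD 2 ^ k] := by
      simpa [Nat.sub_add_cancel (by omega : 2 ≤ k)] using
        Nat.pow_two_pow_modEq_one_of_odd hodd (j := k - 2) (by omega)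
    calc b ^ r = b ^ r * 1 ^ t := by simp
      _ ≡ b ^ r * (b ^ 2 ^ (k - 2)) ^ t [MOD 2 ^ k] := (hone.pow t).symm.mul_left _
      _ = b ^ s := by rw [← pow_mul, ← pow_add, ← ht, Nat.add_sub_cancel' hle]

theorem stmt1_general (n k r s : ℕ) (hk : 3 ≤ k)
    (hr : k ≤ r) (hs : k ≤ s) (hrs : r ≡ s [MOD 2 ^ (k - 2)]) :
    powSumDes r n ≡ powSumDes s n [MOD 2 ^ k] :=
  Nat.ModEq.sum fun S _ => Nat.pow_modEq_pow_of_modEq_two_pow (descStat n S) hk hr hs hrs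

theorem stmt1 (n k r s : ℕ) (hn : 1 ≤ n) (hk : 3 ≤ k)
    (hr : k ≤ r) (hs : k ≤ s) (hrs : r ≡ s [MOD 2 ^ (k - 2)]) :
    powSumDes r n ≡ powSumDes s n [MOD 2 ^ k] :=
  stmt1_general n k r s hk hr hs hrs
end

section
/- Let p be a prime, let k ≥ 1, let n ≥ 1, and let r be an integer with r ≥ k·p. If p^k divides A^{r - j·(p-1)}_n for each j = 1, 2, ..., k, then p^k divides A^r_n. -/
lemma sum_eq (p k r : ℕ) (hp : p.Prime) (hr : k * p ≤ r) (b : ℤ) :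
    ∑ j ∈ Finset.range (k+1), (-1:ℤ)^j * (k.choose j) * b^(r - j*(p-1))
      = b^(r - k*(p-1)) * (b^(p-1) - 1)^k := by
  have hq : k * (p-1) + k = k * p := by
    have h1 : p - 1 + 1 = p := Nat.succ_pred_eq_of_pos hp.pos
    calc k * (p-1) + k = k * (p - 1 + 1) := by ring
      _ = k * p := by rw [h1]
  have hkr : k * (p-1) ≤ r := by omega
  have : (b^(p-1) - 1)^k = ∑ m ∈ Finset.range (k+1),
      (b^(p-1))^m * (-1:ℤ)^(k-m) * (k.choose m) := by
    rw [sub_eq_add_neg, add_pow]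
  rw [this, Finset.mul_sum]
  rw [← Finset.sum_range_reflect]
  refine Finset.sum_congr rfl fun j hj => ?_
  simp only [Finset.mem_range] at hj
  have hjk : j ≤ k := by omega
  have hk1 : k + 1 - 1 - j = k - j := by omega
  rw [hk1]
  have h2 : k.choose (k - j) = k.choose j := Nat.choose_symm hjk
  have hmul : (k - j) * (p-1) ≤ k * (p-1) := Nat.mul_le_mul_right _ (by omega)
  have hmul2 : j * (p-1) ≤ k * (p-1) := Nat.mul_le_mul_right _ hjk
  have hexp : r - k*(p-1) + j*(p-1) = r - (k-j)*(p-1) := by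
    have h3 : (k-j) * (p-1) + j*(p-1) = k * (p-1) := by
      rw [← Nat.add_mul]; congr 1; omega
    omega
  rw [h2, ← pow_mul, mul_comm (p-1) j, ← hexp, pow_add]
  ring

lemma dvd_key (p k r : ℕ) (hp : p.Prime) (hr : k * p ≤ r) (b : ℤ) :
    (p:ℤ)^k ∣ b^(r - k*(p-1)) * (b^(p-1) - 1)^k := by
  haveI : Fact p.Prime := ⟨hp⟩
  by_cases hb : (p:ℤ) ∣ b
  · refine Dvd.dvd.mul_right ?_ _
    have hex : k ≤ r - k*(p-1) := by
      have h1 : k * (p-1) + k = k * p := by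
        have h2 : p - 1 + 1 = p := Nat.succ_pred_eq_of_pos hp.pos
        calc k * (p-1) + k = k * (p - 1 + 1) := by ring
          _ = k * p := by rw [h2]
      omega
    exact dvd_trans (pow_dvd_pow_of_dvd hb k) (pow_dvd_pow b hex)
  · refine Dvd.dvd.mul_left ?_ _
    have h : (p:ℤ) ∣ b^(p-1) - 1 := by
      have hb0 : (b : ZMod p) ≠ 0 := by
        rwa [Ne, ZMod.intCast_zmod_eq_zero_iff_dvd]
      have := ZMod.pow_card_sub_one_eq_one hb0
      have : ((b^(p-1) - 1 : ℤ) : ZMod p) = 0 := by push_cast [this]; ring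
      rwa [ZMod.intCast_zmod_eq_zero_iff_dvd] at this
    exact pow_dvd_pow_of_dvd h k

theorem stmt2 (p k n r : ℕ) (hp : p.Prime) (hk : 1 ≤ k) (hn : 1 ≤ n)
    (hr : k * p ≤ r)
    (hdvd : ∀ j, 1 ≤ j → j ≤ k → p ^ k ∣ powSumDes (r - j * (p - 1)) n) :
    p ^ k ∣ powSumDes r n := by
  simp only [powSumDes] at hdvd ⊢
  set P := (Finset.Icc 1 (n-1)).powerset with hP
  rw [← Int.natCast_dvd_natCast]
  push_cast
  set f : ℕ → ℤ := fun j => (-1:ℤ)^j * (k.choose j) *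
    ∑ S ∈ P, (descStat n S : ℤ)^(r - j*(p-1)) with hf
  have hT : (p:ℤ)^k ∣ ∑ j ∈ Finset.range (k+1), f j := by
    have : ∑ j ∈ Finset.range (k+1), f j = ∑ S ∈ P,
        ∑ j ∈ Finset.range (k+1), (-1:ℤ)^j * (k.choose j) * ((descStat n S : ℤ))^(r - j*(p-1)) := by
      rw [Finset.sum_comm]
      refine Finset.sum_congr rfl fun j _ => ?_
      rw [hf]; simp [Finset.mul_sum]
    rw [this]
    refine Finset.dvd_sum fun S _ => ?_
    rw [sum_eq p k r hp hr]
    exact dvd_key p k r hp hr _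
  rw [Finset.sum_range_succ'] at hT
  have hf0 : f 0 = ∑ S ∈ P, (descStat n S : ℤ)^r := by
    simp [hf]
  rw [hf0] at hT
  have hrest : (p:ℤ)^k ∣ ∑ j ∈ Finset.range k, f (j + 1) := by
    refine Finset.dvd_sum fun j hj => ?_
    simp only [Finset.mem_range] at hj
    have := hdvd (j+1) (by omega) (by omega)
    have h2 : ((p:ℤ))^k ∣ ∑ S ∈ P, (descStat n S : ℤ)^(r - (j+1)*(p-1)) := by
      rw [← Int.natCast_dvd_natCast] at this
      push_cast at this
      exact this
    exact Dvd.dvd.mul_left h2 _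
  have final := dvd_sub hT hrest
  simpa using final
end

section
/- Let r be an even positive integer and n ≥ 1. Then A^r_n = Σ_{T_1, T_2, ..., T_r ⊆ [n-1]} (−1)^{|T_1|+|T_2|+...+|T_r|} · 2^{n−1−|T_1 ∪ T_2 ∪ ... ∪ T_r|} · α_n(T_1)·α_n(T_2)···α_n(T_r), where the sum is over all r-tuples of subsets of [n-1]. -/
set_option maxHeartbeats 1000000


/-- `α_n(S) = Σ_{T ⊆ S} β_n(T)`, the number of permutations of `{1,…,n}`
with descent set contained in `S`. -/
def alphaStat (n : ℕ) (S : Finset ℕ) : ℕ :=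
  ∑ T ∈ S.powerset, descStat n T

open Finset

private lemma prod_ite_all {r : ℕ} (p : Fin r → Prop) [DecidablePred p] (f : Fin r → ℤ) :
    (∏ i, (if p i then f i else 0)) = if ∀ i, p i then ∏ i, f i else 0 := by
  by_cases h : ∀ i, p i
  · rw [if_pos h]; exact Finset.prod_congr rfl fun i _ => if_pos (h i)
  · rw [if_neg h]
    obtain ⟨i, hi⟩ := not_forall.mp h
    exact Finset.prod_eq_zero (Finset.mem_univ i) (if_neg hi)

private lemma alt_sum (A B : Finset ℕ) :
    (∑ t ∈ B.powerset, (if A ⊆ t then (-1:ℤ)^t.card else 0))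
      = if A = B then (-1:ℤ)^A.card else 0 := by
  classical
  rw [Finset.sum_ite, Finset.sum_const_zero, add_zero]
  by_cases hAB : A ⊆ B
  · have hbij : (∑ t ∈ B.powerset.filter (fun t => A ⊆ t), (-1:ℤ)^t.card)
        = ∑ s ∈ (B \ A).powerset, (-1:ℤ)^(s.card + A.card) := by
      apply Finset.sum_nbij' (fun t => t \ A) (fun s => s ∪ A)
      · intro t ht
        simp only [Finset.mem_filter, Finset.mem_powerset] at ht ⊢
        exact Finset.sdiff_subset_sdiff ht.1 (Finset.Subset.refl A)
      · intro s hs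
        simp only [Finset.mem_powerset] at hs
        simp only [Finset.mem_filter, Finset.mem_powerset]
        exact ⟨Finset.union_subset (hs.trans Finset.sdiff_subset) hAB,
          Finset.subset_union_right⟩
      · intro t ht
        simp only [Finset.mem_filter] at ht
        exact Finset.sdiff_union_of_subset ht.2
      · intro s hs
        simp only [Finset.mem_powerset] at hs
        have hd : Disjoint s A := (Finset.subset_sdiff.mp hs).2
        rw [Finset.union_sdiff_right, Finset.sdiff_eq_self_of_disjoint hd]
      · intro t ht
        simp only [Finset.mem_filter] at ht
        rw [Finset.card_sdiff_add_card_eq_card ht.2]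
    rw [hbij]
    have : (∑ s ∈ (B \ A).powerset, (-1:ℤ)^(s.card + A.card))
        = (∑ s ∈ (B \ A).powerset, (-1:ℤ)^s.card) * (-1:ℤ)^A.card := by
      rw [Finset.sum_mul]
      exact Finset.sum_congr rfl fun s _ => pow_add _ _ _
    rw [this, Finset.sum_powerset_neg_one_pow_card]
    have hiff : (B \ A = ∅) ↔ (A = B) := by
      rw [Finset.sdiff_eq_empty_iff_subset]
      exact ⟨fun h => Finset.Subset.antisymm hAB h, fun h => by rw [h]⟩
    by_cases h : A = B
    · rw [if_pos (hiff.mpr h), if_pos h, one_mul]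
    · rw [if_neg (fun he => h (hiff.mp he)), if_neg h, zero_mul]
  · rw [if_neg (fun h => hAB (by rw [h]))]
    apply Finset.sum_eq_zero
    intro t ht
    simp only [Finset.mem_filter, Finset.mem_powerset] at ht
    exact absurd (ht.2.trans ht.1) hAB

private lemma pow_card_eq (U V : Finset ℕ) (hV : V ⊆ U) :
    (2:ℤ) ^ (U.card - V.card)
      = ∑ W ∈ U.powerset, (if Disjoint W V then (1:ℤ) else 0) := by
  classical
  rw [Finset.sum_ite, Finset.sum_const_zero, add_zero, Finset.sum_const, nsmul_eq_mul, mul_one]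
  have hfil : U.powerset.filter (fun W => Disjoint W V) = (U \ V).powerset := by
    ext W
    simp [Finset.mem_powerset, Finset.subset_sdiff, disjoint_comm]
  rw [hfil, Finset.card_powerset, Finset.card_sdiff_of_subset hV]
  push_cast
  ring

private lemma hsum (U W A : Finset ℕ) :
    (∑ t ∈ U.powerset, (if A ⊆ t ∧ Disjoint W t then (-1:ℤ)^t.card else 0))
      = if A = U \ W then (-1:ℤ)^A.card else 0 := by
  classical
  rw [← alt_sum A (U \ W)]
  have hfil : (U \ W).powerset = U.powerset.filter (fun t => Disjoint W t) := by
    ext t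
    simp [Finset.mem_powerset, Finset.subset_sdiff, disjoint_comm]
  rw [hfil, Finset.sum_filter]
  apply Finset.sum_congr rfl
  intro t _
  by_cases hd : Disjoint W t <;> by_cases hA : A ⊆ t <;> simp [hd, hA]

private lemma key (r : ℕ) (hr : 0 < r) (hre : Even r) (U : Finset ℕ) (β : Finset ℕ → ℤ) :
    (∑ T ∈ Fintype.piFinset (fun _ : Fin r => U.powerset),
      (-1:ℤ) ^ (∑ i, (T i).card) * 2 ^ (U.card - (Finset.univ.biUnion T).card) *
        ∏ i, (∑ S ∈ (T i).powerset, β S))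
      = ∑ A ∈ U.powerset, (β A) ^ r := by
  classical
  have i0 : Fin r := ⟨0, hr⟩
  set P := U.powerset with hP
  set pi := Fintype.piFinset (fun _ : Fin r => P) with hpi
  -- the inner alternating sum
  have hJ : ∀ S ∈ pi,
      (∑ T ∈ pi,
        (if ∀ i, S i ⊆ T i then
          (-1:ℤ) ^ (∑ i, (T i).card) * 2 ^ (U.card - (Finset.univ.biUnion T).card) else 0))
      = if ∀ i, S i = S i0 then 1 else 0 := by
    intro S hS
    have hSU : ∀ i, S i ⊆ U := fun i =>
      Finset.mem_powerset.mp ((Fintype.mem_piFinset.mp hS) i)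
    have expand : ∀ T ∈ pi,
        (if ∀ i, S i ⊆ T i then
          (-1:ℤ) ^ (∑ i, (T i).card) * 2 ^ (U.card - (Finset.univ.biUnion T).card) else 0)
        = ∑ W ∈ P, ∏ i, (if S i ⊆ T i ∧ Disjoint W (T i) then (-1:ℤ) ^ (T i).card else 0) := by
      intro T hT
      have hTU : Finset.univ.biUnion T ⊆ U := Finset.biUnion_subset.mpr
        (fun i _ => Finset.mem_powerset.mp ((Fintype.mem_piFinset.mp hT) i))
      have h2 : (2:ℤ) ^ (U.card - (Finset.univ.biUnion T).card)
          = ∑ W ∈ P, (if ∀ i, Disjoint W (T i) then (1:ℤ) else 0) := by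
        rw [pow_card_eq U _ hTU]
        apply Finset.sum_congr rfl
        intro W _
        have hiff : Disjoint W (Finset.univ.biUnion T) ↔ ∀ i, Disjoint W (T i) := by
          simp [Finset.disjoint_biUnion_right]
        simp only [hiff]
      have hm1 : (-1:ℤ) ^ (∑ i, (T i).card) = ∏ i, (-1:ℤ) ^ (T i).card :=
        (Finset.prod_pow_eq_pow_sum _ _ _).symm
      rw [hm1, h2, Finset.mul_sum]
      by_cases hc : ∀ i, S i ⊆ T i
      · rw [if_pos hc]
        apply Finset.sum_congr rfl
        intro W _
        rw [prod_ite_all]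
        by_cases hd : ∀ i, Disjoint W (T i)
        · rw [if_pos hd, mul_one, if_pos (fun i => ⟨hc i, hd i⟩)]
        · rw [if_neg hd, mul_zero, if_neg (fun hall => hd (fun i => (hall i).2))]
      · rw [if_neg hc]
        symm
        apply Finset.sum_eq_zero
        intro W _
        rw [prod_ite_all, if_neg (fun hall => hc (fun i => (hall i).1))]
    calc (∑ T ∈ pi,
          (if ∀ i, S i ⊆ T i then
            (-1:ℤ) ^ (∑ i, (T i).card) * 2 ^ (U.card - (Finset.univ.biUnion T).card) else 0))
        = ∑ T ∈ pi, ∑ W ∈ P,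
            ∏ i, (if S i ⊆ T i ∧ Disjoint W (T i) then (-1:ℤ) ^ (T i).card else 0) :=
          Finset.sum_congr rfl expand
      _ = ∑ W ∈ P, ∑ T ∈ pi,
            ∏ i, (if S i ⊆ T i ∧ Disjoint W (T i) then (-1:ℤ) ^ (T i).card else 0) :=
          Finset.sum_comm
      _ = ∑ W ∈ P, ∏ i, ∑ t ∈ P, (if S i ⊆ t ∧ Disjoint W t then (-1:ℤ)^t.card else 0) := by
          apply Finset.sum_congr rfl
          intro W _
          exact (Finset.prod_univ_sum (fun _ : Fin r => P)
            (fun i t => if S i ⊆ t ∧ Disjoint W t then (-1:ℤ)^t.card else 0)).symm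
      _ = ∑ W ∈ P, ∏ i, (if S i = U \ W then (-1:ℤ)^(S i).card else 0) := by
          apply Finset.sum_congr rfl
          intro W _
          exact Finset.prod_congr rfl fun i _ => hsum U W (S i)
      _ = ∑ W ∈ P, (if ∀ i, S i = U \ W then 1 else 0) := by
          apply Finset.sum_congr rfl
          intro W _
          rw [prod_ite_all]
          by_cases h : ∀ i, S i = U \ W
          · rw [if_pos h, if_pos h]
            have hcg : ∀ i : Fin r, i ∈ Finset.univ → (-1:ℤ)^(S i).card = (-1:ℤ)^(U \ W).card :=
              fun i _ => by rw [h i]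
            rw [Finset.prod_congr rfl hcg, Finset.prod_const, Finset.card_univ,
              Fintype.card_fin, ← pow_mul]
            exact Even.neg_one_pow (hre.mul_left _)
          · rw [if_neg h, if_neg h]
      _ = if ∀ i, S i = S i0 then 1 else 0 := by
          by_cases h : ∀ i, S i = S i0
          · rw [if_pos h]
            rw [Finset.sum_eq_single_of_mem (U \ S i0)
              (Finset.mem_powerset.mpr Finset.sdiff_subset) ?_]
            · rw [if_pos]
              intro i
              rw [Finset.sdiff_sdiff_eq_self (hSU i0), h i]
            · intro W hW hne
              rw [if_neg]
              intro hall
              apply hne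
              have h1 : S i0 = U \ W := hall i0
              have h2 : W ⊆ U := Finset.mem_powerset.mp hW
              rw [h1, Finset.sdiff_sdiff_eq_self h2]
          · rw [if_neg h]
            apply Finset.sum_eq_zero
            intro W _
            rw [if_neg]
            intro hall
            exact h (fun i => by rw [hall i, hall i0])
  -- expand the product of alphas
  have step1 : ∀ T ∈ pi,
      (∏ i, ∑ S ∈ (T i).powerset, β S)
        = ∑ S ∈ pi, (if ∀ i, S i ⊆ T i then ∏ i, β (S i) else 0) := by
    intro T hT
    have h1 : ∀ i : Fin r, (∑ S ∈ (T i).powerset, β S)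
        = ∑ S ∈ P, (if S ⊆ T i then β S else 0) := by
      intro i
      rw [← Finset.sum_filter]
      congr 1
      ext S
      simp only [Finset.mem_filter, Finset.mem_powerset, hP]
      have hTi : T i ⊆ U := Finset.mem_powerset.mp ((Fintype.mem_piFinset.mp hT) i)
      exact ⟨fun h => ⟨h.trans hTi, h⟩, fun h => h.2⟩
    calc (∏ i, ∑ S ∈ (T i).powerset, β S)
        = ∏ i, ∑ S ∈ P, (if S ⊆ T i then β S else 0) :=
          Finset.prod_congr rfl (fun i _ => h1 i)
      _ = ∑ S ∈ pi, ∏ i, (if S i ⊆ T i then β (S i) else 0) :=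
          Finset.prod_univ_sum _ _
      _ = ∑ S ∈ pi, (if ∀ i, S i ⊆ T i then ∏ i, β (S i) else 0) :=
          Finset.sum_congr rfl (fun S _ => prod_ite_all _ _)
  calc (∑ T ∈ pi,
        (-1:ℤ) ^ (∑ i, (T i).card) * 2 ^ (U.card - (Finset.univ.biUnion T).card) *
          ∏ i, (∑ S ∈ (T i).powerset, β S))
      = ∑ T ∈ pi, ∑ S ∈ pi,
          (if ∀ i, S i ⊆ T i then
            (-1:ℤ) ^ (∑ i, (T i).card) * 2 ^ (U.card - (Finset.univ.biUnion T).card) else 0)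
            * ∏ i, β (S i) := by
        apply Finset.sum_congr rfl
        intro T hT
        rw [step1 T hT, Finset.mul_sum]
        apply Finset.sum_congr rfl
        intro S _
        rw [mul_ite, mul_zero, ite_mul, zero_mul]
    _ = ∑ S ∈ pi, ∑ T ∈ pi,
          (if ∀ i, S i ⊆ T i then
            (-1:ℤ) ^ (∑ i, (T i).card) * 2 ^ (U.card - (Finset.univ.biUnion T).card) else 0)
            * ∏ i, β (S i) := Finset.sum_comm
    _ = ∑ S ∈ pi, (if ∀ i, S i = S i0 then 1 else 0) * ∏ i, β (S i) := by
        apply Finset.sum_congr rfl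
        intro S hS
        rw [← Finset.sum_mul, hJ S hS]
    _ = ∑ S ∈ pi.filter (fun S => ∀ i, S i = S i0), ∏ i, β (S i) := by
        rw [Finset.sum_filter]
        apply Finset.sum_congr rfl
        intro S _
        rw [ite_mul, one_mul, zero_mul]
    _ = ∑ A ∈ P, (β A) ^ r := by
        apply Finset.sum_nbij' (fun S => S i0) (fun A => fun _ => A)
        · intro S hS
          simp only [Finset.mem_filter, hpi, Fintype.mem_piFinset] at hS
          exact hS.1 i0
        · intro A hA
          simp only [Finset.mem_filter, hpi, Fintype.mem_piFinset]
          exact ⟨fun _ => hA, fun _ => trivial⟩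
        · intro S hS
          simp only [Finset.mem_filter] at hS
          funext i
          exact (hS.2 i).symm
        · intro A _
          rfl
        · intro S hS
          simp only [Finset.mem_filter] at hS
          have : ∀ i : Fin r, i ∈ Finset.univ → β (S i) = β (S i0) :=
            fun i _ => by rw [hS.2 i]
          rw [Finset.prod_congr rfl this, Finset.prod_const, Finset.card_univ, Fintype.card_fin]

theorem stmt3 (r n : ℕ) (hr : 0 < r) (hre : Even r) (hn : 1 ≤ n) :
    (powSumDes r n : ℤ) =
      ∑ T ∈ Fintype.piFinset (fun _ : Fin r => (Finset.Icc 1 (n - 1)).powerset),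
        (-1 : ℤ) ^ (∑ i, (T i).card) *
          2 ^ (n - 1 - (Finset.univ.biUnion T).card) *
          ∏ i, (alphaStat n (T i) : ℤ) := by
  classical
  have hU : (Finset.Icc 1 (n - 1)).card = n - 1 := by
    rw [Nat.card_Icc]; omega
  have hL : (powSumDes r n : ℤ)
      = ∑ A ∈ (Finset.Icc 1 (n - 1)).powerset, ((descStat n A : ℤ)) ^ r := by
    unfold powSumDes
    push_cast
    rfl
  rw [hL, ← key r hr hre (Finset.Icc 1 (n - 1)) (fun S => (descStat n S : ℤ))]
  apply Finset.sum_congr rfl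
  intro T _
  rw [hU]
  congr 1
  apply Finset.prod_congr rfl
  intro i _
  unfold alphaStat
  push_cast
  rfl
end

section
/- Let r be an odd positive integer and n ≥ 1. Then A^r_n = Σ (−1)^{n−1+|T_1|+|T_2|+...+|T_r|} · α_n(T_1)·α_n(T_2)···α_n(T_r), where the sum is over all r-tuples of subsets T_1, T_2, ..., T_r of [n-1] whose union T_1 ∪ T_2 ∪ ... ∪ T_r equals [n-1]. -/
section AuxIE
open Finset

lemma neg_one_pow_sub' {a b : ℕ} (h : b ≤ a) : (-1 : ℤ) ^ (a - b) = (-1)^a * (-1)^b := by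
  conv_rhs => rw [← Nat.sub_add_cancel h, pow_add]
  rw [mul_assoc, ← pow_add, ← two_mul, pow_mul]
  simp

lemma sum_superset_neg_one (E V : Finset ℕ) (hV : V ⊆ E) :
    ∑ U ∈ E.powerset.filter (fun U => V ⊆ U), (-1:ℤ)^U.card
      = (-1)^E.card * (if V = E then 1 else 0) := by
  have hiff : V = E ↔ E \ V = ∅ := by
    rw [sdiff_eq_empty_iff_subset]
    exact ⟨fun h => h ▸ le_rfl, fun h => subset_antisymm hV h⟩
  rw [if_congr hiff rfl rfl,
    ← Finset.sum_powerset_neg_one_pow_card (x := E \ V), Finset.mul_sum]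
  apply Finset.sum_nbij' (i := fun U => E \ U) (j := fun W => E \ W)
  · intro U hU
    simp only [mem_filter, mem_powerset] at hU ⊢
    exact sdiff_subset_sdiff le_rfl hU.2
  · intro W hW
    simp only [mem_powerset] at hW
    simp only [mem_filter, mem_powerset]
    exact ⟨sdiff_subset, subset_sdiff.mpr ⟨hV, Finset.disjoint_right.mpr fun x hx => (mem_sdiff.mp (hW hx)).2⟩⟩
  · intro U hU
    simp only [mem_filter, mem_powerset] at hU
    rw [sdiff_sdiff_right_self, inf_eq_inter, inter_eq_right.mpr hU.1]
  · intro W hW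
    simp only [mem_powerset] at hW
    rw [sdiff_sdiff_right_self, inf_eq_inter, inter_eq_right.mpr (hW.trans sdiff_subset)]
  · intro U hU
    simp only [mem_filter, mem_powerset] at hU
    rw [card_sdiff_of_subset hU.1, neg_one_pow_sub' (card_le_card hU.1), ← mul_assoc, ← pow_add,
      ← two_mul, pow_mul]
    simp

lemma hsq (m : ℕ) : (-1:ℤ)^m * (-1)^m = 1 := by
  rw [← pow_add, ← two_mul, pow_mul]; simp

lemma innerSumAux (b : Finset ℕ → ℤ) (U : Finset ℕ) :
    ∑ T ∈ U.powerset, (-1:ℤ)^T.card * (∑ V ∈ T.powerset, b V) = (-1)^U.card * b U := by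
  calc ∑ T ∈ U.powerset, (-1:ℤ)^T.card * (∑ V ∈ T.powerset, b V)
      = ∑ T ∈ U.powerset, ∑ V ∈ U.powerset, if V ⊆ T then (-1:ℤ)^T.card * b V else 0 := by
        refine Finset.sum_congr rfl fun T hT => ?_
        rw [mem_powerset] at hT
        rw [Finset.mul_sum, ← Finset.sum_filter]
        apply Finset.sum_congr _ (fun _ _ => rfl)
        ext V
        simp only [mem_filter, mem_powerset]
        exact ⟨fun h => ⟨h.trans hT, h⟩, fun h => h.2⟩
    _ = ∑ V ∈ U.powerset, b V * ∑ T ∈ U.powerset.filter (fun T => V ⊆ T), (-1:ℤ)^T.card := by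
        rw [Finset.sum_comm]
        refine Finset.sum_congr rfl fun V hV => ?_
        rw [Finset.mul_sum, ← Finset.sum_filter]
        exact Finset.sum_congr rfl fun T _ => by ring
    _ = ∑ V ∈ U.powerset, b V * ((-1)^U.card * if V = U then 1 else 0) := by
        refine Finset.sum_congr rfl fun V hV => ?_
        rw [sum_superset_neg_one U V (mem_powerset.mp hV)]
    _ = (-1)^U.card * b U := by
        simp [mul_ite, Finset.sum_ite_eq', mul_comm]

end AuxIE

open Finset in
theorem stmt4 (r n : ℕ) (hr : 0 < r) (hro : Odd r) (hn : 1 ≤ n) :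
    (powSumDes r n : ℤ) =
      ∑ T ∈ (Fintype.piFinset (fun _ : Fin r => (Finset.Icc 1 (n - 1)).powerset)).filter
          (fun T => Finset.univ.biUnion T = Finset.Icc 1 (n - 1)),
        (-1 : ℤ) ^ (n - 1 + ∑ i, (T i).card) * ∏ i, (alphaStat n (T i) : ℤ) := by
  classical
  set E := Finset.Icc 1 (n - 1) with hEdef
  have hE : E.card = n - 1 := by rw [hEdef, Nat.card_Icc]; omega
  have hα : ∀ T : Finset ℕ, ((alphaStat n T : ℤ)) = ∑ V ∈ T.powerset, (descStat n V : ℤ) := by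
    intro T; rw [alphaStat]; push_cast; rfl
  have key : ∀ U : Finset ℕ, ∑ T ∈ U.powerset, (-1:ℤ)^T.card * (alphaStat n T : ℤ)
      = (-1)^U.card * (descStat n U : ℤ) := by
    intro U
    simp only [hα]
    exact innerSumAux _ U
  symm
  calc
    ∑ T ∈ (Fintype.piFinset fun _ : Fin r => E.powerset).filter
        (fun T => Finset.univ.biUnion T = E),
        (-1 : ℤ) ^ (n - 1 + ∑ i, (T i).card) * ∏ i, (alphaStat n (T i) : ℤ)
      = ∑ T ∈ Fintype.piFinset (fun _ : Fin r => E.powerset),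
          ∑ U ∈ E.powerset, if Finset.univ.biUnion T ⊆ U then
            (-1:ℤ)^E.card * (-1)^U.card *
              ((-1 : ℤ) ^ (n - 1 + ∑ i, (T i).card) * ∏ i, (alphaStat n (T i) : ℤ)) else 0 := by
        rw [Finset.sum_filter]
        refine Finset.sum_congr rfl fun T hT => ?_
        have hTE : Finset.univ.biUnion T ⊆ E := by
          rw [Finset.biUnion_subset]
          intro i _
          exact Finset.mem_powerset.mp ((Fintype.mem_piFinset.mp hT) i)
        set w := (-1 : ℤ) ^ (n - 1 + ∑ i, (T i).card) * ∏ i, (alphaStat n (T i) : ℤ) with hw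
        have hstep : ∑ U ∈ E.powerset, (if Finset.univ.biUnion T ⊆ U then
              ((-1:ℤ)^E.card * (-1)^U.card * w) else 0)
            = (-1:ℤ)^E.card * w * ∑ U ∈ E.powerset.filter (fun U => Finset.univ.biUnion T ⊆ U),
                (-1:ℤ)^U.card := by
          rw [Finset.mul_sum, ← Finset.sum_filter]
          exact Finset.sum_congr rfl fun U _ => by ring
        rw [hstep, sum_superset_neg_one E _ hTE]
        rcases eq_or_ne (Finset.univ.biUnion T) E with h | h
        · rw [if_pos h, if_pos h]
          have hrw : (-1:ℤ)^E.card * w * ((-1)^E.card * 1)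
              = ((-1:ℤ)^E.card * (-1)^E.card) * w := by ring
          rw [hrw, hsq, one_mul]
        · rw [if_neg h, if_neg h]; ring
    _ = ∑ U ∈ E.powerset, (-1:ℤ)^E.card * (-1)^U.card *
          ∑ T ∈ Fintype.piFinset (fun _ : Fin r => U.powerset),
            ((-1 : ℤ) ^ (n - 1 + ∑ i, (T i).card) * ∏ i, (alphaStat n (T i) : ℤ)) := by
        rw [Finset.sum_comm]
        refine Finset.sum_congr rfl fun U hU => ?_
        have hUE : U ⊆ E := Finset.mem_powerset.mp hU
        have hset : (Fintype.piFinset (fun _ : Fin r => E.powerset)).filter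
            (fun T => Finset.univ.biUnion T ⊆ U)
            = Fintype.piFinset (fun _ : Fin r => U.powerset) := by
          ext T
          simp only [Finset.mem_filter, Fintype.mem_piFinset, Finset.mem_powerset,
            Finset.biUnion_subset, Finset.mem_univ, forall_const, forall_true_left]
          exact ⟨fun h => h.2, fun h => ⟨fun i => (h i).trans hUE, h⟩⟩
        rw [← Finset.sum_filter, hset, Finset.mul_sum]
    _ = ∑ U ∈ E.powerset, (-1:ℤ)^E.card * (-1)^U.card *
          ((-1:ℤ)^(n-1) * ((-1)^U.card * (descStat n U : ℤ))^r) := by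
        refine Finset.sum_congr rfl fun U hU => ?_
        congr 1
        have hterm : ∀ T : Fin r → Finset ℕ,
            (-1 : ℤ) ^ (n - 1 + ∑ i, (T i).card) * ∏ i, (alphaStat n (T i) : ℤ)
            = (-1:ℤ)^(n-1) * ∏ i, ((-1:ℤ)^(T i).card * (alphaStat n (T i) : ℤ)) := by
          intro T
          rw [pow_add, Finset.prod_mul_distrib, Finset.prod_pow_eq_pow_sum]
          ring
        rw [Finset.sum_congr rfl (fun T _ => hterm T), ← Finset.mul_sum]
        have hpu := Finset.prod_univ_sum (fun _ : Fin r => U.powerset)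
          (fun _ S => (-1:ℤ)^S.card * (alphaStat n S : ℤ))
        rw [← hpu]
        congr 1
        rw [Finset.prod_congr rfl (fun i _ => key U), Finset.prod_const, Finset.card_univ,
          Fintype.card_fin]
    _ = ∑ U ∈ E.powerset, ((descStat n U : ℤ))^r := by
        refine Finset.sum_congr rfl fun U hU => ?_
        have h3 : (((-1:ℤ)^U.card * (descStat n U : ℤ))^r) = (-1)^U.card * (descStat n U:ℤ)^r := by
          rw [mul_pow, ← pow_mul, mul_comm U.card r, pow_mul, hro.neg_one_pow]
        rw [h3, hE]
        calc (-1:ℤ)^(n-1) * (-1)^U.card * ((-1:ℤ)^(n-1) * ((-1)^U.card * (descStat n U:ℤ)^r))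
            = ((-1:ℤ)^(n-1) * (-1)^(n-1)) * (((-1:ℤ)^U.card * (-1)^U.card) * (descStat n U:ℤ)^r) := by
              ring
          _ = (descStat n U:ℤ)^r := by rw [hsq, hsq]; ring
    _ = (powSumDes r n : ℤ) := by rw [powSumDes]; push_cast; rfl
end

section
/- Let p be an odd prime, r an even positive integer, and k ≥ 0. Then p does not divide A^r_{p^k}. -/
/-!
Write `α_n(T)` for the number of permutations whose descent set is contained in `T`, so that
`α_n(T) = ∑_{S ⊆ T} β_n(S)` and `α_n(∅) = 1`. If `t ∈ T`, the permutations counted by `α_n(T)`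
are spread evenly over the `n.choose t` possible sets of values in the first `t` positions:
composing with the permutation that moves one such set onto another while keeping both it and its
complement in order creates no descent outside `t`. For `n = p ^ k` and `0 < t < n` this makes
`α_n(T) ≡ 0 (mod p)` whenever `T ≠ ∅`, and inverting the sum over subsets gives
`β_n(S) ≡ (-1)^|S| (mod p)`. Hence `A^r_n ≡ 2^(n-1) (mod p)` for even `r`, and `p` is odd.
-/

open Finset Equiv

theorem Finset.eq_of_sum_powerset_eq {α M : Type*} [DecidableEq α] [AddCommGroup M]
    {U : Finset α} {f g : Finset α → M}
    (h : ∀ S ⊆ U, ∑ T ∈ S.powerset, f T = ∑ T ∈ S.powerset, g T) {S : Finset α} (hS : S ⊆ U) :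
    f S = g S := by
  induction S using Finset.strongInduction with
  | H S ih =>
    have hsub : ∀ T ∈ S.powerset.erase S, f T = g T := fun T hT => by
      obtain ⟨hne, hle⟩ := mem_erase.1 hT
      have hlt : T ⊂ S := ssubset_of_subset_of_ne (mem_powerset.1 hle) hne
      exact ih T hlt (hlt.subset.trans hS)
    have := h S hS
    rw [← add_sum_erase _ _ (mem_powerset_self S), ← add_sum_erase _ g (mem_powerset_self S),
      sum_congr rfl hsub] at this
    exact add_right_cancel this

lemma descSet_subset_Icc (n : ℕ) (π : Perm (Fin n)) : descSet n π ⊆ Icc 1 (n - 1) :=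
  filter_subset _ _

lemma mem_descSet {n i : ℕ} {π : Perm (Fin n)} (hi : i < n) :
    i ∈ descSet n π ↔ 0 < i ∧ π ⟨i, hi⟩ < π ⟨i - 1, (i.sub_le 1).trans_lt hi⟩ := by
  simp only [descSet, mem_filter, mem_Icc]
  exact ⟨fun ⟨h, hlt⟩ => ⟨h.1, hlt _ hi⟩, fun ⟨h, hlt⟩ => ⟨⟨h, by omega⟩, fun _ _ => hlt⟩⟩

lemma descSet_eq_empty_iff {n : ℕ} {π : Perm (Fin n)} : descSet n π = ∅ ↔ π = 1 := by
  refine ⟨fun h => ?_, ?_⟩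
  · suffices hπ : StrictMono π from Equiv.ext fun x => hπ.apply_eq
    cases n with
    | zero => exact fun a => a.elim0
    | succ m =>
      refine Fin.strictMono_iff_lt_succ.2 fun i => lt_of_not_ge fun hle => ?_
      have hne : π i.succ ≠ π i.castSucc := π.injective.ne (Fin.castSucc_lt_succ (i := i)).ne'
      have hdes : (i : ℕ) + 1 ∈ descSet (m + 1) π :=
        (mem_descSet (by omega)).2 ⟨i.succ_pos, lt_of_le_of_ne hle hne⟩
      simp [h] at hdes
  · rintro rfl
    refine eq_empty_of_forall_notMem fun i hi => ?_
    have hin : i < n := by have := mem_Icc.1 (descSet_subset_Icc n 1 hi); omega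
    have := ((mem_descSet hin).1 hi).2
    simp [Fin.lt_def] at this
    omega

lemma card_filter_descSet_subset (n : ℕ) (T : Finset ℕ) :
    #{π : Perm (Fin n) | descSet n π ⊆ T} = ∑ S ∈ T.powerset, descStat n S := by
  rw [card_eq_sum_card_fiberwise (f := descSet n) (t := T.powerset) fun π hπ =>
    mem_powerset.2 (mem_filter.1 hπ).2]
  refine sum_congr rfl fun S hS => ?_
  rw [descStat, filter_filter]
  congr 1
  ext π
  simp only [mem_filter, mem_univ, true_and, and_iff_right_iff_imp]
  rintro rfl
  exact mem_powerset.1 hS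

lemma card_filter_descSet_subset_empty (n : ℕ) :
    #{π : Perm (Fin n) | descSet n π ⊆ ∅} = 1 := by
  simp only [subset_empty, descSet_eq_empty_iff, filter_eq', mem_univ, if_true, card_singleton]

section Shuffle

variable {n : ℕ}

def prefixValues (π : Perm (Fin n)) (t : ℕ) : Finset (Fin n) :=
  ({j : Fin n | (j : ℕ) < t} : Finset (Fin n)).image π

lemma apply_mem_prefixValues_iff {π : Perm (Fin n)} {t : ℕ} {j : Fin n} :
    π j ∈ prefixValues π t ↔ (j : ℕ) < t := by
  simp [prefixValues, π.injective.eq_iff]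

lemma card_prefixValues (π : Perm (Fin n)) {t : ℕ} (ht : t ≤ n) : #(prefixValues π t) = t := by
  rw [prefixValues, card_image_of_injective _ π.injective, Fin.card_filter_val_lt, min_eq_right ht]

lemma prefixValues_mul (ρ π : Perm (Fin n)) (t : ℕ) :
    prefixValues (ρ * π) t = (prefixValues π t).image ρ := by
  simp only [prefixValues, image_image]
  rfl

lemma descSet_mul_subset {ρ π : Perm (Fin n)} {t : ℕ}
    (h₁ : StrictMonoOn ρ (prefixValues π t)) (h₂ : StrictMonoOn ρ ↑(prefixValues π t)ᶜ) :
    descSet n (ρ * π) ⊆ insert t (descSet n π) := by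
  intro i hi
  have hin : i < n := by have := mem_Icc.1 (descSet_subset_Icc n _ hi); omega
  obtain ⟨hi0, hlt⟩ := (mem_descSet hin).1 hi
  rw [Perm.mul_apply, Perm.mul_apply] at hlt
  have hmem (j : Fin n) : π j ∈ prefixValues π t ↔ (j : ℕ) < t := apply_mem_prefixValues_iff
  have hin' : i - 1 < n := (i.sub_le 1).trans_lt hin
  rcases lt_trichotomy i t with hit | rfl | hit
  · have ha := (hmem ⟨i, hin⟩).2 hit
    have hb := (hmem ⟨i - 1, hin'⟩).2 (by simp only; omega)
    exact mem_insert_of_mem ((mem_descSet hin).2 ⟨hi0, (h₁.lt_iff_lt ha hb).1 hlt⟩)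
  · exact mem_insert_self _ _
  · have ha : π ⟨i, hin⟩ ∈ (prefixValues π t)ᶜ := by
      rw [mem_compl, hmem]; simp only; omega
    have hb : π ⟨i - 1, hin'⟩ ∈ (prefixValues π t)ᶜ := by
      rw [mem_compl, hmem]; simp only; omega
    exact mem_insert_of_mem ((mem_descSet hin).2 ⟨hi0, (h₂.lt_iff_lt ha hb).1 hlt⟩)

noncomputable def sortedPerm (A B : Finset (Fin n)) (h : #A = #B) : Perm (Fin n) :=
  Equiv.subtypeCongr
    ((Fintype.orderIsoFinOfCardEq {x // x ∈ A} rfl).symm.trans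
      (Fintype.orderIsoFinOfCardEq {x // x ∈ B} (by simp [h]))).toEquiv
    ((Fintype.orderIsoFinOfCardEq {x // x ∉ A} rfl).symm.trans
      (Fintype.orderIsoFinOfCardEq {x // x ∉ B} (by simp [Fintype.card_subtype_compl, h]))).toEquiv

variable {A B : Finset (Fin n)} (h : #A = #B)

lemma sortedPerm_mem_iff {x : Fin n} : sortedPerm A B h x ∈ B ↔ x ∈ A := by
  by_cases hx : x ∈ A
  · simp [sortedPerm, Equiv.subtypeCongr, sumCompl_symm_apply_of_pos hx, hx]
  · simp only [sortedPerm, Equiv.subtypeCongr, trans_apply, sumCompl_symm_apply_of_neg hx, hx,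
      iff_false, sumCongr_apply, Sum.map_inr, sumCompl_apply_inr]
    exact Subtype.prop (p := (· ∉ B)) _

lemma strictMonoOn_sortedPerm : StrictMonoOn (sortedPerm A B h) A := by
  intro x hx y hy hxy
  rw [mem_coe] at hx hy
  simpa [sortedPerm, Equiv.subtypeCongr, sumCompl_symm_apply_of_pos hx,
    sumCompl_symm_apply_of_pos hy] using hxy

lemma strictMonoOn_sortedPerm_compl : StrictMonoOn (sortedPerm A B h) ↑Aᶜ := by
  intro x hx y hy hxy
  rw [coe_compl, Set.mem_compl_iff, mem_coe] at hx hy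
  simpa [sortedPerm, Equiv.subtypeCongr, sumCompl_symm_apply_of_neg hx,
    sumCompl_symm_apply_of_neg hy] using hxy

lemma image_sortedPerm : A.image (sortedPerm A B h) = B := by
  ext y
  obtain ⟨x, rfl⟩ := (sortedPerm A B h).surjective y
  simp [(sortedPerm A B h).injective.eq_iff, sortedPerm_mem_iff]

end Shuffle

section Fibers

variable {n : ℕ} {T : Finset ℕ} {t : ℕ}

lemma card_filter_prefixValues_le (ht : t ∈ T) {A B : Finset (Fin n)} (h : #A = #B) :
    #{π : Perm (Fin n) | descSet n π ⊆ T ∧ prefixValues π t = A} ≤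
      #{π : Perm (Fin n) | descSet n π ⊆ T ∧ prefixValues π t = B} := by
  refine card_le_card_of_injOn (sortedPerm A B h * ·) (fun π hπ => ?_)
    fun π₁ _ π₂ _ => mul_left_cancel
  simp only [coe_filter, mem_univ, true_and, Set.mem_ofPred_eq] at hπ ⊢
  obtain ⟨hdes, rfl⟩ := hπ
  refine ⟨?_, by rw [prefixValues_mul, image_sortedPerm]⟩
  exact (descSet_mul_subset (strictMonoOn_sortedPerm h) (strictMonoOn_sortedPerm_compl h)).trans
    (insert_subset ht hdes)

/-- Recording the values on the first `t ∈ T` positions splits the permutations with descents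
in `T` into `n.choose t` classes, which are equinumerous by `card_filter_prefixValues_le`. -/
lemma choose_dvd_card_filter_descSet_subset (ht : t ∈ T) (htn : t ≤ n) :
    n.choose t ∣ #{π : Perm (Fin n) | descSet n π ⊆ T} := by
  have hfiber : ∀ A ∈ powersetCard t (univ : Finset (Fin n)),
      #{π ∈ {π : Perm (Fin n) | descSet n π ⊆ T} | prefixValues π t = A} =
        #{π : Perm (Fin n) | descSet n π ⊆ T ∧ prefixValues π t = prefixValues 1 t} := by
    intro A hA
    have hcard : #A = #(prefixValues (1 : Perm (Fin n)) t) := by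
      rw [(mem_powersetCard_univ.1 hA), card_prefixValues 1 htn]
    rw [filter_filter]
    exact le_antisymm (card_filter_prefixValues_le ht hcard)
      (card_filter_prefixValues_le ht hcard.symm)
  rw [card_eq_sum_card_fiberwise fun π _ => mem_powersetCard_univ.2 (card_prefixValues π htn),
    sum_const_nat hfiber, card_powersetCard, card_univ, Fintype.card_fin]
  exact dvd_mul_right _ _

end Fibers

lemma descStat_prime_pow_cast {p k : ℕ} (hp : p.Prime) {S : Finset ℕ}
    (hS : S ⊆ Icc 1 (p ^ k - 1)) : (descStat (p ^ k) S : ZMod p) = (-1) ^ #S := by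
  refine eq_of_sum_powerset_eq (f := fun S => (descStat (p ^ k) S : ZMod p))
    (g := fun S => (-1) ^ #S) (fun S hS => ?_) hS
  have hsign : ∑ T ∈ S.powerset, (-1 : ZMod p) ^ #T =
      ((∑ T ∈ S.powerset, (-1 : ℤ) ^ #T : ℤ) : ZMod p) := by push_cast; rfl
  rw [← Nat.cast_sum, ← card_filter_descSet_subset, hsign, sum_powerset_neg_one_pow_card]
  obtain rfl | ⟨t, ht⟩ := S.eq_empty_or_nonempty
  · rw [card_filter_descSet_subset_empty]
    simp
  · have htn := mem_Icc.1 (hS ht)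
    rw [if_neg (ne_empty_of_mem ht), Int.cast_zero, ZMod.natCast_eq_zero_iff]
    exact (hp.dvd_choose_pow (by omega) (by omega)).trans
      (choose_dvd_card_filter_descSet_subset ht (by omega))

theorem stmt7_general (p r k : ℕ) (hp : p.Prime) (hodd : Odd p)
    (hre : Even r) :
    ¬ p ∣ powSumDes r (p ^ k) := by
  have hcast : (powSumDes r (p ^ k) : ZMod p) = ((2 ^ (p ^ k - 1) : ℕ) : ZMod p) := by
    have hterm : ∀ S ∈ (Icc 1 (p ^ k - 1)).powerset, (descStat (p ^ k) S : ZMod p) ^ r = 1 :=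
      fun S hS => by
        rw [descStat_prime_pow_cast hp (mem_powerset.1 hS), ← pow_mul, mul_comm, pow_mul,
          hre.neg_one_pow, one_pow]
    push_cast [powSumDes]
    rw [sum_congr rfl hterm, sum_const, card_powerset, Nat.card_Icc, nsmul_one, Nat.cast_pow,
      Nat.cast_ofNat, Nat.add_sub_cancel]
  intro hdvd
  rw [← ZMod.natCast_eq_zero_iff, hcast, ZMod.natCast_eq_zero_iff] at hdvd
  exact hp.ne_one (((Nat.coprime_two_left.2 hodd).pow_left _).symm.eq_one_of_dvd hdvd)

theorem stmt7 (p r k : ℕ) (hp : p.Prime) (hodd : Odd p)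
    (hr : 0 < r) (hre : Even r) :
    ¬ p ∣ powSumDes r (p ^ k) :=
  stmt7_general p r k hp hodd hre
end

section
/- Let p be a prime, r an odd positive integer, and n ≥ 1. Then (p − 1) · v_p(A^r_n) ≥ n − 1 − r · d_p(n), as an inequality of integers, where v_p denotes the p-adic valuation (note A^r_n ≥ 1). -/
/-- `u_p(m)`, the sum of the digits of `m` in base `p`. -/
def digitSum (p m : ℕ) : ℕ := (Nat.digits p m).sum

/-- `d_p(m) = u_p(m) - 1`, the depth of `m` in base `p`. -/
def depth (p m : ℕ) : ℕ := digitSum p m - 1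

open Finset

lemma Fin.strictMono_of_lt_add_one {α : Type*} [Preorder α] {m : ℕ} {f : Fin m → α}
    (h : ∀ i (hi : i + 1 < m), f ⟨i, by omega⟩ < f ⟨i + 1, hi⟩) : StrictMono f := by
  cases m with
  | zero => exact fun a => a.elim0
  | succ m => exact Fin.strictMono_iff_lt_succ.2 fun i => h i (by simp)

lemma digitSum_pos {p m : ℕ} (hm : m ≠ 0) : 0 < digitSum p m := by
  rw [digitSum, Nat.pos_iff_ne_zero, Ne, List.sum_eq_zero_iff]
  exact fun h => Nat.getLast_digit_ne_zero p hm (h _ (List.getLast_mem _))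

section Padic

variable {p : ℕ} [hp : Fact p.Prime]

lemma digitSum_add_digitSum_sub_le_sub_one_mul_padicValNat_choose {n t : ℕ} (h : t ≤ n) :
    (digitSum p t + digitSum p (n - t) : ℤ) - digitSum p n ≤
      (p - 1) * padicValNat p (n.choose t) := by
  have kummer : (p - 1) * padicValNat p (n.choose t) =
      digitSum p t + digitSum p (n - t) - digitSum p n :=
    sub_one_mul_padicValNat_choose_eq_sub_sum_digits h
  have truncation : (digitSum p t + digitSum p (n - t) : ℤ) - digitSum p n ≤
      ((digitSum p t + digitSum p (n - t) - digitSum p n : ℕ) : ℤ) := by omega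
  rwa [← kummer, Nat.cast_mul, Nat.cast_sub hp.out.one_le, Nat.cast_one] at truncation

lemma padicValNat_finset_prod {ι : Type*} (s : Finset ι) {f : ι → ℕ} (hf : ∀ i ∈ s, f i ≠ 0) :
    padicValNat p (∏ i ∈ s, f i) = ∑ i ∈ s, padicValNat p (f i) := by
  simp_rw [← Nat.factorization_def _ hp.out, Nat.factorization_prod hf, Finsupp.coe_finsetSum,
    Finset.sum_apply]

lemma le_mul_padicValNat_of_eq_sum {A : ℕ} (hA : A ≠ 0) {ι : Type*}
    {s : Finset ι} {ε : ι → ℤ} {f : ι → ℕ} (hsum : (A : ℤ) = ∑ i ∈ s, ε i * f i) {c m : ℤ}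
    (hc : 0 ≤ c) (hf : ∀ i ∈ s, m ≤ c * padicValNat p (f i)) : m ≤ c * padicValNat p A := by
  by_contra! hlt
  apply pow_succ_padicValNat_not_dvd (p := p) hA
  rw [← Int.natCast_dvd_natCast, hsum]
  refine dvd_sum fun i hi => dvd_mul_of_dvd_right ?_ _
  have hval : padicValNat p A + 1 ≤ padicValNat p (f i) := by
    by_contra! hle
    have := mul_le_mul_of_nonneg_left (Int.ofNat_le.2 (Nat.le_of_lt_succ hle)) hc
    linarith [hf i hi]
  exact_mod_cast (pow_dvd_pow p hval).trans pow_padicValNat_dvd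

end Padic

section Powerset

variable {α : Type*} [DecidableEq α]

lemma sum_Icc_neg_one_pow_card {U V : Finset α} (h : U ⊆ V) :
    ∑ S ∈ Icc U V, (-1 : ℤ) ^ #S = if U = V then (-1) ^ #V else 0 := by
  have disj : ∀ R ∈ (V \ U).powerset, Disjoint U R := fun R hR =>
    (disjoint_sdiff.mono_right (mem_powerset.1 hR))
  rw [Icc_eq_image_powerset h, sum_image fun R₁ h₁ R₂ h₂ he => by
      rw [← union_sdiff_cancel_left (disj R₁ h₁), he, union_sdiff_cancel_left (disj R₂ h₂)]]
  rw [sum_congr rfl fun R hR => by rw [card_union_of_disjoint (disj R hR), pow_add], ← mul_sum,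
    sum_powerset_neg_one_pow_card]
  simp only [sdiff_eq_empty_iff_subset]
  by_cases hUV : U = V
  · subst hUV
    simp
  · rw [if_neg fun hVU => hUV (h.antisymm hVU), if_neg hUV, mul_zero]

lemma powerset_moebius_inversion (f g : Finset α → ℤ)
    (hfg : ∀ T, g T = ∑ R ∈ T.powerset, f R) (S : Finset α) :
    f S = (-1) ^ #S * ∑ T ∈ S.powerset, (-1) ^ #T * g T := by
  have swap : ∑ T ∈ S.powerset, (-1) ^ #T * g T =
      ∑ R ∈ S.powerset, ∑ T ∈ Icc R S, (-1) ^ #T * f R := by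
    simp_rw [hfg, mul_sum]
    refine sum_comm' fun T R => ?_
    simp only [mem_powerset, mem_Icc]
    exact ⟨fun ⟨hT, hR⟩ => ⟨⟨hR, hT⟩, hR.trans hT⟩, fun ⟨⟨hR, hT⟩, _⟩ => ⟨hT, hR⟩⟩
  rw [swap, sum_congr rfl fun R hR => by
    rw [← sum_mul, sum_Icc_neg_one_pow_card (mem_powerset.1 hR)]]
  simp [ite_mul, ← mul_assoc, ← mul_pow]

lemma sum_powerset_pow_eq_sum_sup_eq {r : ℕ} (hr : Odd r) (E : Finset α)
    (c : Finset α → ℤ) :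
    ∑ S ∈ E.powerset, ((-1) ^ #S * ∑ T ∈ S.powerset, c T) ^ r =
      (-1) ^ #E * ∑ g ∈ Fintype.piFinset (fun _ : Fin r => E.powerset) with univ.sup g = E,
        ∏ i, c (g i) := by
  have expand : ∀ S : Finset α, ((-1) ^ #S * ∑ T ∈ S.powerset, c T) ^ r =
      ∑ g ∈ Fintype.piFinset (fun _ : Fin r => S.powerset), (-1) ^ #S * ∏ i, c (g i) := by
    intro S
    rw [mul_pow, ← pow_mul, pow_mul', hr.neg_one_pow, sum_pow', mul_sum]
  have swap : ∑ S ∈ E.powerset, ∑ g ∈ Fintype.piFinset (fun _ : Fin r => S.powerset),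
      (-1) ^ #S * ∏ i, c (g i) =
      ∑ g ∈ Fintype.piFinset (fun _ : Fin r => E.powerset), ∑ S ∈ Icc (univ.sup g) E,
        (-1) ^ #S * ∏ i, c (g i) := by
    refine sum_comm' fun S g => ?_
    simp only [mem_powerset, Fintype.mem_piFinset, mem_Icc, Finset.sup_le_iff, mem_univ,
      true_implies]
    exact ⟨fun ⟨hS, hg⟩ => ⟨⟨hg, hS⟩, fun i => (hg i).trans hS⟩, fun ⟨⟨hg, hS⟩, _⟩ => ⟨hS, hg⟩⟩
  rw [sum_congr rfl fun S _ => expand S, swap, sum_filter, mul_sum]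
  refine sum_congr rfl fun g hg => ?_
  have hgE : univ.sup g ⊆ E := Finset.sup_le fun i _ => mem_powerset.1 (Fintype.mem_piFinset.1 hg i)
  rw [← sum_mul, sum_Icc_neg_one_pow_card hgE, ite_mul, zero_mul, mul_ite, mul_zero]

end Powerset

section Descents

variable {n : ℕ}

lemma mem_descSet_add_one (π : Equiv.Perm (Fin n)) {i : ℕ} :
    i + 1 ∈ descSet n π ↔ ∃ hi : i + 1 < n, π ⟨i + 1, hi⟩ < π ⟨i, by omega⟩ := by
  simp only [descSet, mem_filter, mem_Icc, add_tsub_cancel_right]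
  constructor
  · rintro ⟨⟨-, hi⟩, h⟩
    exact ⟨by omega, h (by omega) (by omega)⟩
  · rintro ⟨hi, h⟩
    exact ⟨⟨by omega, by omega⟩, fun _ _ => h⟩

lemma descSet_subset_iff (π : Equiv.Perm (Fin n)) (T : Finset ℕ) :
    descSet n π ⊆ T ↔ ∀ i (hi : i + 1 < n), i + 1 ∉ T → π ⟨i, by omega⟩ < π ⟨i + 1, hi⟩ := by
  constructor
  · intro h i hi hiT
    refine lt_of_le_of_ne (not_lt.1 fun hlt => hiT (h ((mem_descSet_add_one π).2 ⟨hi, hlt⟩))) ?_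
    exact π.injective.ne (by simp [Fin.ext_iff])
  · intro h j hj
    obtain ⟨i, rfl⟩ : ∃ i, j = i + 1 :=
      Nat.exists_eq_add_one.2 (by simp only [descSet, mem_filter, mem_Icc] at hj; omega)
    obtain ⟨hi, hlt⟩ := (mem_descSet_add_one π).1 hj
    by_contra hiT
    exact (h i hi hiT).asymm hlt

lemma descSet_one : descSet n 1 = ∅ := by
  ext i
  simp only [descSet, mem_filter, mem_Icc, Equiv.Perm.one_apply, Fin.mk_lt_mk, notMem_empty,
    iff_false]
  omega

end Descents

def descSubsetCount (n : ℕ) (T : Finset ℕ) : ℕ :=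
  #{π : Equiv.Perm (Fin n) | descSet n π ⊆ T}

lemma descSubsetCount_pos (n : ℕ) (T : Finset ℕ) : 0 < descSubsetCount n T :=
  card_pos.2 ⟨1, by simp [descSet_one]⟩

section Shuffle

variable {n t : ℕ}

def prefixImage (hle : t ≤ n) (π : Equiv.Perm (Fin n)) : Finset (Fin n) :=
  univ.map ((Fin.castLEEmb hle).trans π.toEmbedding)

lemma card_prefixImage (hle : t ≤ n) (π : Equiv.Perm (Fin n)) : #(prefixImage hle π) = t := by
  simp [prefixImage]

lemma apply_castLE_mem_prefixImage (hle : t ≤ n) (π : Equiv.Perm (Fin n)) (i : Fin t) :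
    π (Fin.castLE hle i) ∈ prefixImage hle π :=
  mem_map_of_mem _ (mem_univ i)

noncomputable def prefixPattern (hle : t ≤ n) (π : Equiv.Perm (Fin n)) : Equiv.Perm (Fin t) :=
  Equiv.ofBijective
    (fun i => ((prefixImage hle π).orderIsoOfFin (card_prefixImage hle π)).symm
      ⟨π (Fin.castLE hle i), apply_castLE_mem_prefixImage hle π i⟩)
    (Finite.injective_iff_bijective.1 fun i j hij => by simpa using hij)

lemma orderEmbOfFin_prefixPattern (hle : t ≤ n) (π : Equiv.Perm (Fin n)) (i : Fin t) :
    (prefixImage hle π).orderEmbOfFin (card_prefixImage hle π) (prefixPattern hle π i) =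
      π (Fin.castLE hle i) := by
  simp [prefixPattern, ← coe_orderIsoOfFin_apply]

lemma card_compl_of_card_eq {W : Finset (Fin n)} (hW : #W = t) : #Wᶜ = n - t := by
  rw [card_compl, hW, Fintype.card_fin]

lemma le_of_card_eq {W : Finset (Fin n)} (hW : #W = t) : t ≤ n :=
  hW ▸ card_le_univ W |>.trans_eq (Fintype.card_fin n)

/-- Places the pattern `σ` on the values `W` in the first `t` positions, followed by the
remaining values in increasing order. -/
def shuffleInto (W : Finset (Fin n)) (hW : #W = t) (σ : Equiv.Perm (Fin t)) :
    Equiv.Perm (Fin n) :=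
  (finCongr (Nat.add_sub_of_le (le_of_card_eq hW))).symm.trans <|
    finSumFinEquiv.symm.trans <|
      (Equiv.sumCongr σ (Equiv.refl _)).trans (finSumEquivOfFinset hW (card_compl_of_card_eq hW))

lemma shuffleInto_apply_of_lt (W : Finset (Fin n)) (hW : #W = t) (σ : Equiv.Perm (Fin t))
    (i : Fin n) (hi : i < t) : shuffleInto W hW σ i = W.orderEmbOfFin hW (σ ⟨i, hi⟩) := by
  have : finSumFinEquiv.symm (Fin.cast (Nat.add_sub_of_le (le_of_card_eq hW)).symm i) =
      Sum.inl ⟨i, hi⟩ := by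
    rw [Equiv.symm_apply_eq]; ext; simp
  simp [shuffleInto, this]

lemma shuffleInto_apply_of_le (W : Finset (Fin n)) (hW : #W = t) (σ : Equiv.Perm (Fin t))
    (i : Fin n) (hi : t ≤ i) :
    shuffleInto W hW σ i = Wᶜ.orderEmbOfFin (card_compl_of_card_eq hW) ⟨i - t, by omega⟩ := by
  have : finSumFinEquiv.symm (Fin.cast (Nat.add_sub_of_le (le_of_card_eq hW)).symm i) =
      Sum.inr ⟨i - t, by omega⟩ := by
    rw [Equiv.symm_apply_eq]; ext; simp; omega
  simp [shuffleInto, this]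

lemma descSet_shuffleInto_subset (W : Finset (Fin n)) (hW : #W = t) {σ : Equiv.Perm (Fin t)}
    {T : Finset ℕ} (hσ : descSet t σ ⊆ T) : descSet n (shuffleInto W hW σ) ⊆ insert t T := by
  rw [descSet_subset_iff]
  intro i hi hiT
  rcases lt_or_ge (i + 1) t with hit | hti
  · rw [shuffleInto_apply_of_lt _ _ _ _ (show i < t by omega),
      shuffleInto_apply_of_lt _ _ _ _ hit]
    exact (W.orderEmbOfFin hW).strictMono
      ((descSet_subset_iff σ T).1 hσ i hit fun h => hiT (mem_insert_of_mem h))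
  · have hti' : t ≤ i := by
      by_contra! h
      exact hiT (show i + 1 = t by omega ▸ mem_insert_self t T)
    rw [shuffleInto_apply_of_le _ _ _ _ hti',
      shuffleInto_apply_of_le _ _ _ _ (show t ≤ i + 1 by omega)]
    exact (Wᶜ.orderEmbOfFin _).strictMono
      (Fin.mk_lt_mk.2 (Nat.sub_lt_sub_right hti' i.lt_succ_self))

lemma prefixImage_shuffleInto (hle : t ≤ n) (W : Finset (Fin n)) (hW : #W = t)
    (σ : Equiv.Perm (Fin t)) : prefixImage hle (shuffleInto W hW σ) = W := by
  refine eq_of_subset_of_card_le (fun x hx => ?_) (by rw [card_prefixImage, hW])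
  obtain ⟨i, -, rfl⟩ := mem_map.1 hx
  rw [Function.Embedding.trans_apply, Equiv.coe_toEmbedding,
    shuffleInto_apply_of_lt _ _ _ _ (by simp)]
  exact orderEmbOfFin_mem W hW _

lemma prefixPattern_shuffleInto (hle : t ≤ n) (W : Finset (Fin n)) (hW : #W = t)
    (σ : Equiv.Perm (Fin t)) : prefixPattern hle (shuffleInto W hW σ) = σ := by
  have orderEmbOfFin_congr : ∀ {s s' : Finset (Fin n)} (hs : #s = t) (hs' : #s' = t),
      s = s' → ∀ i, s.orderEmbOfFin hs i = s'.orderEmbOfFin hs' i := by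
    rintro s _ hs hs' rfl i
    rfl
  ext i : 1
  apply (orderEmbOfFin _ (card_prefixImage hle (shuffleInto W hW σ))).injective
  rw [orderEmbOfFin_prefixPattern, shuffleInto_apply_of_lt _ _ _ _ (by simp),
    orderEmbOfFin_congr _ hW (prefixImage_shuffleInto hle W hW σ)]
  rfl

variable {T : Finset ℕ}

lemma descSet_prefixPattern_subset (hle : t ≤ n) {π : Equiv.Perm (Fin n)}
    (hπ : descSet n π ⊆ insert t T) : descSet t (prefixPattern hle π) ⊆ T := by
  rw [descSet_subset_iff]
  intro i hi hiT
  rw [← (orderEmbOfFin _ (card_prefixImage hle π)).lt_iff_lt, orderEmbOfFin_prefixPattern,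
    orderEmbOfFin_prefixPattern]
  exact (descSet_subset_iff π _).1 hπ i (by omega) fun h =>
    (mem_insert.1 h).elim (by omega) hiT

lemma apply_eq_orderEmbOfFin_compl_prefixImage (hle : t ≤ n) {π : Equiv.Perm (Fin n)}
    (hT : ∀ j ∈ T, j < t) (hπ : descSet n π ⊆ insert t T) (i : Fin n) (hi : t ≤ i) :
    π i = (prefixImage hle π)ᶜ.orderEmbOfFin (card_compl_of_card_eq (card_prefixImage hle π))
      ⟨i - t, by omega⟩ := by
  let tail : Fin (n - t) → Fin n := fun k => π ⟨t + k, by omega⟩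
  have tail_mono : StrictMono tail := Fin.strictMono_of_lt_add_one fun k hk =>
    (descSet_subset_iff π _).1 hπ (t + k) (by omega) fun h => by
      rcases mem_insert.1 h with h | h
      · omega
      · exact absurd (hT _ h) (by omega)
  have tail_mem : ∀ k, tail k ∈ (prefixImage hle π)ᶜ := by
    intro k
    rw [mem_compl]
    intro hk
    obtain ⟨j, -, hj⟩ := mem_map.1 hk
    have : (j : ℕ) = t + k := congrArg Fin.val (π.injective hj)
    omega
  rw [← orderEmbOfFin_unique _ tail_mem tail_mono]
  congr 1
  ext
  change (i : ℕ) = t + (i - t)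
  omega

lemma shuffleInto_prefixPattern (hle : t ≤ n) {π : Equiv.Perm (Fin n)} (hT : ∀ j ∈ T, j < t)
    (hπ : descSet n π ⊆ insert t T) :
    shuffleInto (prefixImage hle π) (card_prefixImage hle π) (prefixPattern hle π) = π := by
  ext i : 1
  rcases lt_or_ge (i : ℕ) t with hi | hi
  · rw [shuffleInto_apply_of_lt _ _ _ _ hi, orderEmbOfFin_prefixPattern]
    rfl
  · rw [shuffleInto_apply_of_le _ _ _ _ hi, apply_eq_orderEmbOfFin_compl_prefixImage hle hT hπ i hi]

end Shuffle

lemma descSubsetCount_insert {n t : ℕ} {T : Finset ℕ} (hle : t ≤ n) (hT : ∀ j ∈ T, j < t) :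
    descSubsetCount n (insert t T) = n.choose t * descSubsetCount t T := by
  have hbij : descSubsetCount n (insert t T) =
      #(powersetCard t (univ : Finset (Fin n)) ×ˢ
        ({σ : Equiv.Perm (Fin t) | descSet t σ ⊆ T} : Finset _)) := by
    refine card_bij' (fun π _ => (prefixImage hle π, prefixPattern hle π))
      (fun Wσ h => shuffleInto Wσ.1 (mem_powersetCard_univ.1 (mem_product.1 h).1) Wσ.2)
      ?_ ?_ ?_ ?_
    · intro π hπ
      simp only [mem_product, mem_powersetCard_univ, mem_filter_univ] at hπ ⊢
      exact ⟨card_prefixImage hle π, descSet_prefixPattern_subset hle hπ⟩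
    · intro Wσ h
      simp only [mem_product, mem_filter_univ] at h ⊢
      exact descSet_shuffleInto_subset _ _ h.2
    · intro π hπ
      exact shuffleInto_prefixPattern hle hT ((mem_filter_univ π).1 hπ)
    · intro Wσ _
      exact Prod.ext (prefixImage_shuffleInto hle _ _ _) (prefixPattern_shuffleInto hle _ _ _)
  rw [hbij, card_product, card_powersetCard, card_univ, Fintype.card_fin]
  rfl

lemma descSubsetCount_eq_sum_descStat (n : ℕ) (T : Finset ℕ) :
    descSubsetCount n T = ∑ R ∈ T.powerset, descStat n R := by
  rw [descSubsetCount, card_eq_sum_card_fiberwise fun π hπ => mem_powerset.2 (mem_filter.1 hπ).2]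
  refine sum_congr rfl fun R hR => ?_
  rw [descStat, filter_filter]
  congr 1
  exact filter_congr fun π _ => ⟨And.right, fun h => ⟨h ▸ mem_powerset.1 hR, h⟩⟩

lemma descStat_eq_sum_descSubsetCount (n : ℕ) (S : Finset ℕ) :
    (descStat n S : ℤ) = (-1) ^ #S * ∑ T ∈ S.powerset, (-1) ^ #T * (descSubsetCount n T : ℤ) :=
  powerset_moebius_inversion (fun S => (descStat n S : ℤ)) (fun T => (descSubsetCount n T : ℤ))
    (fun T => by exact_mod_cast descSubsetCount_eq_sum_descStat n T) S

lemma powSumDes_pos (r n : ℕ) : 0 < powSumDes r n := by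
  have : 0 < descStat n ∅ := card_pos.2 ⟨1, by simp [descSet_one]⟩
  exact (pow_pos this r).trans_le
    (single_le_sum (f := fun S => descStat n S ^ r) (fun _ _ => Nat.zero_le _)
      (empty_mem_powerset _))

lemma card_add_one_sub_digitSum_le_padicValNat_descSubsetCount {p : ℕ} [hp : Fact p.Prime]
    (T : Finset ℕ) :
    ∀ {n : ℕ}, n ≠ 0 → T ⊆ Icc 1 (n - 1) →
      (#T + 1 - digitSum p n : ℤ) ≤ (p - 1) * padicValNat p (descSubsetCount n T) := by
  induction T using Finset.induction_on_max with
  | empty =>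
    intro n hn _
    have hu := digitSum_pos (p := p) hn
    have hval : (0 : ℤ) ≤ (p - 1) * padicValNat p (descSubsetCount n ∅) :=
      mul_nonneg (by linarith [hp.out.one_le]) (Nat.cast_nonneg _)
    simp only [card_empty, Nat.cast_zero, zero_add]
    omega
  | insert t T hlt ih =>
    intro n hn hsub
    have ht := mem_Icc.1 (hsub (mem_insert_self t T))
    have hT : T ⊆ Icc 1 (t - 1) := fun j hj => by
      have := mem_Icc.1 (hsub (mem_insert_of_mem hj))
      have := hlt j hj
      exact mem_Icc.2 ⟨by omega, by omega⟩
    rw [descSubsetCount_insert (by omega) hlt,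
      padicValNat.mul (Nat.choose_pos (by omega)).ne' (descSubsetCount_pos _ _).ne',
      card_insert_of_notMem fun h => (hlt t h).false]
    have ih_t := ih (by omega) hT
    have kummer := digitSum_add_digitSum_sub_le_sub_one_mul_padicValNat_choose (p := p)
      (show t ≤ n by omega)
    have hu := digitSum_pos (p := p) (m := n - t) (by omega)
    simp only [Nat.cast_add, Nat.cast_one, mul_add]
    linarith

lemma powSumDes_eq_sum_sup_eq {r : ℕ} (hr : Odd r) (n : ℕ) :
    (powSumDes r n : ℤ) =
      ∑ g ∈ Fintype.piFinset (fun _ : Fin r => (Icc 1 (n - 1)).powerset) with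
        univ.sup g = Icc 1 (n - 1),
        ((-1) ^ #(Icc 1 (n - 1)) * ∏ i, (-1) ^ #(g i)) *
          ((∏ i, descSubsetCount n (g i) : ℕ) : ℤ) := by
  rw [powSumDes, Nat.cast_sum]
  simp_rw [Nat.cast_pow, descStat_eq_sum_descSubsetCount]
  rw [sum_powerset_pow_eq_sum_sup_eq hr, mul_sum]
  push_cast
  simp_rw [prod_mul_distrib, mul_assoc]

lemma le_sub_one_mul_padicValNat_prod_descSubsetCount {p : ℕ} [Fact p.Prime] {n r : ℕ}
    (hn : n ≠ 0) {g : Fin r → Finset ℕ} (hg : univ.sup g = Icc 1 (n - 1)) :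
    (n - 1 - r * (digitSum p n - 1) : ℤ) ≤
      (p - 1) * padicValNat p (∏ i, descSubsetCount n (g i)) := by
  have hcover : (n - 1 : ℤ) ≤ ∑ i, (#(g i) : ℤ) := by
    have : n - 1 ≤ ∑ i, #(g i) := calc
      n - 1 = #(univ.sup g) := by rw [hg, Nat.card_Icc]; omega
      _ ≤ ∑ i, #(g i) := by rw [sup_eq_biUnion]; exact card_biUnion_le
    push_cast [← Nat.cast_sum]
    omega
  rw [padicValNat_finset_prod _ fun i _ => (descSubsetCount_pos n (g i)).ne', Nat.cast_sum,
    mul_sum]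
  calc (n - 1 - r * (digitSum p n - 1) : ℤ) ≤ ∑ i, (#(g i) + 1 - digitSum p n : ℤ) := by
        simp only [sum_sub_distrib, sum_add_distrib, sum_const, card_univ, Fintype.card_fin,
          nsmul_eq_mul, mul_one]
        linarith
    _ ≤ _ := sum_le_sum fun i _ =>
      card_add_one_sub_digitSum_le_padicValNat_descSubsetCount _ hn (hg ▸ le_sup (mem_univ i))

theorem stmt10_general (p r n : ℕ) (hp : p.Prime) (hro : Odd r) (hn : 1 ≤ n) :
    (n : ℤ) - 1 - r * depth p n ≤ (p - 1) * padicValNat p (powSumDes r n) := by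
  have := Fact.mk hp
  have hdepth : (depth p n : ℤ) = digitSum p n - 1 := by
    rw [depth, Nat.cast_sub (digitSum_pos (by omega)), Nat.cast_one]
  rw [hdepth]
  refine le_mul_padicValNat_of_eq_sum (powSumDes_pos r n).ne' (powSumDes_eq_sum_sup_eq hro n)
    (by linarith [hp.two_le]) fun g hg => ?_
  exact le_sub_one_mul_padicValNat_prod_descSubsetCount (by omega) (mem_filter.1 hg).2

theorem stmt10 (p r n : ℕ) (hp : p.Prime) (hr : 0 < r) (hro : Odd r) (hn : 1 ≤ n) :
    (n : ℤ) - 1 - r * depth p n ≤ (p - 1) * padicValNat p (powSumDes r n) :=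
  stmt10_general p r n hp hro hn
end

section
/- If n = 2^k for some k ≥ 0 and r is a positive integer, then 2^{n−1} divides A^r_n. -/
/-!
Write `α(T)` for the number of permutations whose descent set is contained in `T`, so that
`β` is the Möbius transform of `α` on the Boolean lattice of subsets of `[n-1]`. Expanding the
`r`-th powers turns `A^r_n` into a sum over `r`-tuples `(T₁, …, T_r)` of `∏ ±α(Tᵢ)` times
`∑_{S ⊇ ⋃ Tᵢ} ((-1)^r)^|S| = ±(1 + (-1)^r)^|[n-1] \ ⋃ Tᵢ|`, and the last factor is divisible by
`2^|[n-1] \ ⋃ Tᵢ|`. So it suffices that `2^|T|` divides `α(T)`.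

Peeling off the last block of positions gives `α_{t+m}(T ∪ {t}) = C(t+m, t) α_t(T)` for
`t > max T`, and by Kummer's theorem `v₂ C(t+m, t) = s(t) + s(m) - s(t+m)`, where `s` is the
binary digit sum. Inductively `v₂ α_n(T) ≥ |T| + 1 - s(n)`, which is `|T|` when `n = 2^k`.
-/

open Finset

section PowersetSums

variable {X : Type*} [DecidableEq X]

theorem sum_Icc_pow_card {R : Type*} [CommSemiring R] {U I : Finset X} (hUI : U ⊆ I) (x : R) :
    ∑ S ∈ Icc U I, x ^ #S = x ^ #U * (1 + x) ^ #(I \ U) := by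
  have hdisj : ∀ V ∈ (I \ U).powerset, Disjoint U V := fun V hV =>
    disjoint_of_subset_right (mem_powerset.mp hV) disjoint_sdiff
  rw [Icc_eq_image_powerset hUI, sum_image fun V hV W hW h => by
    rw [← union_sdiff_cancel_left (hdisj V hV), ← union_sdiff_cancel_left (hdisj W hW)]
    exact congrArg (· \ U) h]
  rw [add_comm, ← sum_pow_mul_eq_add_pow, mul_sum]
  refine sum_congr rfl fun V hV => ?_
  rw [card_union_of_disjoint (hdisj V hV), pow_add, one_pow, mul_one]

theorem sum_powerset_neg_one_pow_mul_sum_powerset {R : Type*} [CommRing R]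
    (g : Finset X → R) (S : Finset X) :
    ∑ T ∈ S.powerset, (-1) ^ #T * ∑ U ∈ T.powerset, g U = (-1) ^ #S * g S := by
  simp_rw [mul_sum]
  rw [sum_comm' (t' := S.powerset) (s' := fun U => Icc U S) fun T U => by
    simp only [mem_powerset, mem_Icc]
    exact ⟨fun h => ⟨⟨h.2, h.1⟩, h.2.trans h.1⟩, fun h => ⟨h.1.2, h.1.1⟩⟩]
  rw [sum_eq_single_of_mem S (mem_powerset_self S) fun U hU hUS => ?_]
  · simp
  · rw [← sum_mul, sum_Icc_pow_card (mem_powerset.mp hU), add_neg_cancel, zero_pow, mul_zero,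
      zero_mul]
    exact card_ne_zero.mpr
      (sdiff_nonempty.mpr fun h => hUS (subset_antisymm (mem_powerset.mp hU) h))

theorem sum_pow_sum_powerset_eq {R : Type*} [CommRing R] (I : Finset X) (f : Finset X → R)
    (ε : R) (r : ℕ) :
    ∑ S ∈ I.powerset, ε ^ #S * (∑ T ∈ S.powerset, f T) ^ r =
      ∑ g ∈ Fintype.piFinset fun _ : Fin r => I.powerset,
        (∏ i, f (g i)) * (ε ^ #(univ.biUnion g) * (1 + ε) ^ #(I \ univ.biUnion g)) := by
  simp_rw [← Fin.prod_const r, prod_univ_sum, mul_sum]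
  rw [sum_comm' (t' := Fintype.piFinset fun _ : Fin r => I.powerset)
    (s' := fun g => Icc (univ.biUnion g) I) fun S g => by
      simp only [Fintype.mem_piFinset, mem_powerset, mem_Icc, biUnion_subset,
        mem_univ, true_implies]
      exact ⟨fun h => ⟨⟨h.2, h.1⟩, fun i => (h.2 i).trans h.1⟩, fun h => ⟨h.1.2, h.1.1⟩⟩]
  refine sum_congr rfl fun g hg => ?_
  rw [← sum_Icc_pow_card, mul_sum]
  · exact sum_congr rfl fun S _ => mul_comm _ _
  · exact biUnion_subset.mpr fun i _ => mem_powerset.mp (Fintype.mem_piFinset.mp hg i)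

theorem two_pow_card_dvd_sum_pow_sum_powerset {I : Finset X} {f : Finset X → ℤ}
    (hf : ∀ T ⊆ I, 2 ^ #T ∣ f T) {ε : ℤ} (hε : 2 ∣ 1 + ε) (r : ℕ) :
    2 ^ #I ∣ ∑ S ∈ I.powerset, ε ^ #S * (∑ T ∈ S.powerset, f T) ^ r := by
  rw [sum_pow_sum_powerset_eq]
  refine dvd_sum fun g hg => ?_
  have hgI : ∀ i, g i ⊆ I := fun i => mem_powerset.mp (Fintype.mem_piFinset.mp hg i)
  have hUI : univ.biUnion g ⊆ I := biUnion_subset.mpr fun i _ => hgI i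
  have hprod : 2 ^ #(univ.biUnion g) ∣ ∏ i, f (g i) := by
    refine (pow_dvd_pow 2 card_biUnion_le).trans ?_
    rw [← prod_pow_eq_pow_sum]
    exact prod_dvd_prod_of_dvd _ _ fun i _ => hf _ (hgI i)
  rw [← card_sdiff_add_card_eq_card hUI, pow_add, mul_comm (2 ^ _)]
  exact mul_dvd_mul hprod (dvd_mul_of_dvd_right (pow_dvd_pow_of_dvd hε _) _)

end PowersetSums

section Descents

variable {α β : Type*} [LinearOrder α] [LinearOrder β]

/-- `descSet` for arbitrary sequences, so that it applies to restrictions of permutations. -/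
def descents {n : ℕ} (f : Fin n → α) : Finset ℕ :=
  (Icc 1 (n - 1)).filter fun i => ∀ (h1 : i - 1 < n) (h2 : i < n), f ⟨i, h2⟩ < f ⟨i - 1, h1⟩

theorem mem_descents_iff {n i : ℕ} {f : Fin n → α} :
    i ∈ descents f ↔ ∃ (j : ℕ) (hj : j + 1 < n), i = j + 1 ∧ f ⟨j + 1, hj⟩ < f ⟨j, by omega⟩ := by
  simp only [descents, mem_filter, mem_Icc]
  constructor
  · rintro ⟨⟨hi1, hin⟩, h⟩
    obtain ⟨j, rfl⟩ : ∃ j, i = j + 1 := ⟨i - 1, by omega⟩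
    exact ⟨j, by omega, rfl, h (by omega) (by omega)⟩
  · rintro ⟨j, hj, rfl, h⟩
    exact ⟨⟨by omega, by omega⟩, fun _ _ => h⟩

theorem descents_comp_strictMono {n : ℕ} {g : α → β} (hg : StrictMono g) (f : Fin n → α) :
    descents (g ∘ f) = descents f := by
  simp only [descents, Function.comp_apply, hg.lt_iff_lt]

theorem descents_subset_insert_iff {t m : ℕ} {T : Finset ℕ} (hT : ∀ x ∈ T, x < t)
    {f : Fin (t + m) → α} :
    descents f ⊆ insert t T ↔
      descents (f ∘ Fin.castAdd m) ⊆ T ∧ Monotone (f ∘ Fin.natAdd t) := by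
  constructor
  · intro h
    refine ⟨fun i hi => ?_, ?_⟩
    · obtain ⟨j, hj, rfl, hlt⟩ := mem_descents_iff.mp hi
      exact (mem_insert.mp (h (mem_descents_iff.mpr ⟨j, by omega, rfl, hlt⟩))).resolve_left
        (by omega)
    · rcases m with _ | m
      · exact Subsingleton.monotone _
      refine Fin.monotone_iff_le_succ.mpr fun j => not_lt.mp fun hlt => ?_
      rcases mem_insert.mp (h (mem_descents_iff.mpr ⟨t + j, by omega, rfl, hlt⟩)) with h' | h'
      · omega
      · exact absurd (hT _ h') (by omega)
  · rintro ⟨hfirst, hmono⟩ i hi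
    obtain ⟨j, hj, rfl, hlt⟩ := mem_descents_iff.mp hi
    rcases lt_trichotomy (j + 1) t with hjt | hjt | hjt
    · exact mem_insert_of_mem (hfirst (mem_descents_iff.mpr ⟨j, hjt, rfl, hlt⟩))
    · exact hjt ▸ mem_insert_self t T
    · obtain ⟨k, rfl⟩ : ∃ k, j = t + k := ⟨j - t, by omega⟩
      exact absurd (hmono (show (⟨k, by omega⟩ : Fin m) ≤ ⟨k + 1, by omega⟩ from Nat.le_succ k))
        (not_le.mpr hlt)

end Descents

open Equiv

theorem descSet_eq_descents (n : ℕ) (π : Perm (Fin n)) : descSet n π = descents ⇑π := rfl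

/-- `α_n(T)` in the paper. -/
def descSubsetStat (n : ℕ) (T : Finset ℕ) : ℕ :=
  #{π : Perm (Fin n) | descSet n π ⊆ T}

theorem exists_perm_orderEmbOfFin_comp_eq {α : Type*} [LinearOrder α] {t : ℕ} {B : Finset α}
    (hB : #B = t) {f : Fin t → α} (hf : Function.Injective f) (hfB : univ.image f = B) :
    ∃ σ : Perm (Fin t), ⇑(B.orderEmbOfFin hB) ∘ σ = f := by
  have hmem : ∀ j, f j ∈ B := fun j => hfB ▸ mem_image_of_mem f (mem_univ j)
  let g : Fin t → Fin t := fun j => (B.orderIsoOfFin hB).symm ⟨f j, hmem j⟩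
  have hg : Function.Injective g := fun a b h => hf (by simpa [g] using h)
  refine ⟨Equiv.ofBijective g (Finite.injective_iff_bijective.mp hg), funext fun j => ?_⟩
  simp [g, ← coe_orderIsoOfFin_apply]

section Shuffle

variable {t m : ℕ} {B : Finset (Fin (t + m))}

theorem card_compl_of_card_eq_s12 (hB : #B = t) : #Bᶜ = m := by
  rw [card_compl, hB, Fintype.card_fin, Nat.add_sub_cancel_left]

/-- The permutation listing `B` in the relative order `σ`, followed by `Bᶜ` in increasing order. -/
def shufflePerm (B : Finset (Fin (t + m))) (hB : #B = t) (σ : Perm (Fin t)) : Perm (Fin (t + m)) :=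
  finSumFinEquiv.symm.trans
    ((σ.sumCongr (Equiv.refl _)).trans (finSumEquivOfFinset hB (card_compl_of_card_eq_s12 hB)))

@[simp]
theorem shufflePerm_castAdd (hB : #B = t) (σ : Perm (Fin t)) (j : Fin t) :
    shufflePerm B hB σ (Fin.castAdd m j) = B.orderEmbOfFin hB (σ j) := by
  simp [shufflePerm]

@[simp]
theorem shufflePerm_natAdd (hB : #B = t) (σ : Perm (Fin t)) (j : Fin m) :
    shufflePerm B hB σ (Fin.natAdd t j) = Bᶜ.orderEmbOfFin (card_compl_of_card_eq_s12 hB) j := by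
  simp [shufflePerm]

theorem card_filter_image_castAdd_eq (hB : #B = t) (T : Finset ℕ) :
    #{π : Perm (Fin (t + m)) | (descents (π ∘ Fin.castAdd m) ⊆ T ∧ Monotone (π ∘ Fin.natAdd t)) ∧
        univ.image (π ∘ Fin.castAdd m) = B} =
      #{σ : Perm (Fin t) | descents σ ⊆ T} := by
  have hcast : ∀ σ, shufflePerm B hB σ ∘ Fin.castAdd m = B.orderEmbOfFin hB ∘ σ :=
    fun σ => funext (shufflePerm_castAdd hB σ)
  have hnat : ∀ σ, shufflePerm B hB σ ∘ Fin.natAdd t = Bᶜ.orderEmbOfFin _ :=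
    fun σ => funext (shufflePerm_natAdd hB σ)
  refine (card_bij (fun σ _ => shufflePerm B hB σ) (fun σ hσ => ?_) (fun σ₁ _ σ₂ _ h => ?_)
    fun π hπ => ?_).symm
  · simp only [mem_filter, mem_univ, true_and] at hσ ⊢
    rw [hcast, hnat, descents_comp_strictMono (OrderEmbedding.strictMono _), image_comp,
      image_univ_equiv, image_orderEmbOfFin_univ]
    exact ⟨⟨hσ, OrderEmbedding.monotone _⟩, rfl⟩
  · refine Equiv.ext fun j => ?_
    simpa using congrArg (fun π => π (Fin.castAdd m j)) h
  · simp only [mem_filter, mem_univ, true_and] at hπ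
    obtain ⟨⟨hdesc, hmono⟩, himage⟩ := hπ
    obtain ⟨σ, hσ⟩ := exists_perm_orderEmbOfFin_comp_eq hB
      (π.injective.comp (Fin.castAdd_injective t m)) himage
    have hrest : π ∘ Fin.natAdd t = Bᶜ.orderEmbOfFin (card_compl_of_card_eq_s12 hB) := by
      refine orderEmbOfFin_unique _ (fun j => ?_)
        (hmono.strictMono_of_injective (π.injective.comp (Fin.natAdd_injective m t)))
      rw [mem_compl, ← himage]
      simp only [mem_image, mem_univ, true_and, Function.comp_apply, π.injective.eq_iff, not_exists]
      intro i h
      have := congrArg Fin.val h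
      simp only [Fin.val_castAdd, Fin.val_natAdd] at this
      omega
    refine ⟨σ, ?_, Equiv.ext fun j => Fin.addCases (fun i => ?_) (fun i => ?_) j⟩
    · simpa [← hσ, descents_comp_strictMono (OrderEmbedding.strictMono _)] using hdesc
    · simpa using congrFun hσ i
    · simpa using (congrFun hrest i).symm

end Shuffle

theorem descSubsetStat_insert {t m : ℕ} {T : Finset ℕ} (hT : ∀ x ∈ T, x < t) :
    descSubsetStat (t + m) (insert t T) = (t + m).choose t * descSubsetStat t T := by
  let P : Finset (Perm (Fin (t + m))) :=
    {π | descents (π ∘ Fin.castAdd m) ⊆ T ∧ Monotone (π ∘ Fin.natAdd t)}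
  have hmaps : ∀ π ∈ P, univ.image (π ∘ Fin.castAdd m) ∈ powersetCard t univ := fun π _ =>
    mem_powersetCard.mpr ⟨subset_univ _, by
      rw [card_image_of_injective _ (π.injective.comp (Fin.castAdd_injective t m)), card_univ,
        Fintype.card_fin]⟩
  have hfiber : ∀ B ∈ powersetCard t univ,
      #(P.filter fun π : Perm (Fin (t + m)) => univ.image (π ∘ Fin.castAdd m) = B) =
        descSubsetStat t T := fun B hB => by
    rw [filter_filter]
    exact card_filter_image_castAdd_eq (mem_powersetCard.mp hB).2 T
  have hP : descSubsetStat (t + m) (insert t T) = #P := by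
    simp only [descSubsetStat, descSet_eq_descents, descents_subset_insert_iff hT, P]
  rw [hP, card_eq_sum_card_fiberwise hmaps, sum_congr rfl hfiber, sum_const, card_powersetCard,
    card_univ, Fintype.card_fin, smul_eq_mul]

theorem Nat.digits_sum_pos (b : ℕ) {n : ℕ} (hn : n ≠ 0) : 0 < (Nat.digits b n).sum :=
  (Nat.pos_of_ne_zero (Nat.getLast_digit_ne_zero b hn)).trans_le
    (List.le_sum_of_mem (List.getLast_mem _))

theorem Nat.digits_sum_base_pow {b : ℕ} (hb : 1 < b) (k : ℕ) : (Nat.digits b (b ^ k)).sum = 1 := by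
  simpa [Nat.digits_of_lt b 1 one_ne_zero hb] using
    congrArg List.sum (Nat.digits_base_pow_mul (k := k) hb one_pos)

theorem two_pow_digits_sum_dvd_mul_choose (t m : ℕ) :
    2 ^ ((Nat.digits 2 t).sum + (Nat.digits 2 m).sum) ∣
      2 ^ (Nat.digits 2 (t + m)).sum * (t + m).choose t := by
  have hkummer := @sub_one_mul_padicValNat_choose_eq_sub_sum_digits' 2 t m
    ⟨Nat.prime_two⟩
  rw [add_comm m t] at hkummer
  calc 2 ^ ((Nat.digits 2 t).sum + (Nat.digits 2 m).sum)
      ∣ 2 ^ ((Nat.digits 2 (t + m)).sum + padicValNat 2 ((t + m).choose t)) :=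
        pow_dvd_pow 2 (by omega)
    _ ∣ 2 ^ (Nat.digits 2 (t + m)).sum * (t + m).choose t := by
        rw [pow_add]
        exact mul_dvd_mul_left _ pow_padicValNat_dvd

theorem two_pow_card_succ_dvd_mul_descSubsetStat (T : Finset ℕ) :
    ∀ n, 0 < n → T ⊆ Icc 1 (n - 1) →
      2 ^ (#T + 1) ∣ 2 ^ (Nat.digits 2 n).sum * descSubsetStat n T := by
  induction T using Finset.induction_on_max with
  | empty =>
    intro n hn _
    simpa using dvd_mul_of_dvd_left (dvd_pow_self 2 (Nat.digits_sum_pos 2 hn.ne').ne') _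
  | insert t T hT ih =>
    intro n hn hTn
    have ht := mem_Icc.mp (hTn (mem_insert_self t T))
    obtain ⟨m, rfl⟩ : ∃ m, n = t + m := ⟨n - t, by omega⟩
    have IH := ih t (by omega) fun x hx => mem_Icc.mpr
      ⟨(mem_Icc.mp (hTn (mem_insert_of_mem hx))).1, by have := hT x hx; omega⟩
    have hm := Nat.digits_sum_pos 2 (show m ≠ 0 by omega)
    rw [descSubsetStat_insert hT, card_insert_of_notMem fun h => lt_irrefl t (hT t h)]
    refine (Nat.mul_dvd_mul_iff_left (pow_pos two_pos (Nat.digits 2 t).sum)).mp ?_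
    calc 2 ^ (Nat.digits 2 t).sum * 2 ^ (#T + 1 + 1)
        ∣ 2 ^ ((Nat.digits 2 t).sum + (Nat.digits 2 m).sum) * 2 ^ (#T + 1) := by
          rw [← pow_add, ← pow_add]
          exact pow_dvd_pow 2 (by omega)
      _ ∣ (2 ^ (Nat.digits 2 (t + m)).sum * (t + m).choose t) *
            (2 ^ (Nat.digits 2 t).sum * descSubsetStat t T) :=
          mul_dvd_mul (two_pow_digits_sum_dvd_mul_choose t m) IH
      _ = 2 ^ (Nat.digits 2 t).sum *
            (2 ^ (Nat.digits 2 (t + m)).sum * ((t + m).choose t * descSubsetStat t T)) := by ring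

theorem two_pow_card_dvd_descSubsetStat_two_pow {k : ℕ} {T : Finset ℕ}
    (hT : T ⊆ Icc 1 (2 ^ k - 1)) : 2 ^ #T ∣ descSubsetStat (2 ^ k) T := by
  have h := two_pow_card_succ_dvd_mul_descSubsetStat T (2 ^ k) (by positivity) hT
  rw [Nat.digits_sum_base_pow one_lt_two, pow_one, pow_succ, mul_comm] at h
  exact (Nat.mul_dvd_mul_iff_left two_pos).mp h

theorem descSubsetStat_eq_sum_descStat (n : ℕ) (T : Finset ℕ) :
    descSubsetStat n T = ∑ S ∈ T.powerset, descStat n S := by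
  rw [descSubsetStat, card_eq_sum_card_fiberwise fun π hπ =>
    mem_powerset.mpr (mem_filter.mp hπ).2]
  refine sum_congr rfl fun S hS => ?_
  rw [descStat, filter_filter]
  congr 1
  refine filter_congr fun π _ => ⟨And.right, fun h => ⟨h ▸ mem_powerset.mp hS, h⟩⟩

theorem descStat_eq_neg_one_pow_mul_sum (n : ℕ) (S : Finset ℕ) :
    (descStat n S : ℤ) =
      (-1) ^ #S * ∑ T ∈ S.powerset, (-1) ^ #T * (descSubsetStat n T : ℤ) := by
  simp_rw [descSubsetStat_eq_sum_descStat, Nat.cast_sum]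
  rw [sum_powerset_neg_one_pow_mul_sum_powerset, ← mul_assoc, ← mul_pow, neg_one_mul, neg_neg,
    one_pow, one_mul]

theorem stmt12_general (k r n : ℕ) (hn : n = 2 ^ k) :
    2 ^ (n - 1) ∣ powSumDes r n := by
  subst hn
  set I := Icc 1 (2 ^ k - 1)
  have hI : #I = 2 ^ k - 1 := by simp [I]
  have hsign : (2 : ℤ) ∣ 1 + (-1) ^ r := by
    rcases neg_one_pow_eq_or ℤ r with h | h <;> simp [h]
  have key := two_pow_card_dvd_sum_pow_sum_powerset
    (f := fun T => (-1) ^ #T * (descSubsetStat (2 ^ k) T : ℤ))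
    (fun T hT => dvd_mul_of_dvd_right
      (by exact_mod_cast two_pow_card_dvd_descSubsetStat_two_pow hT) _) hsign r
  rw [hI] at key
  suffices (2 : ℤ) ^ (2 ^ k - 1) ∣ powSumDes r (2 ^ k) by exact_mod_cast this
  convert key using 1
  simp only [powSumDes, Nat.cast_sum, Nat.cast_pow, descStat_eq_neg_one_pow_mul_sum, mul_pow,
    ← pow_mul, mul_comm r]

theorem stmt12 (k r n : ℕ) (hn : n = 2 ^ k) (hr : 0 < r) :
    2 ^ (n - 1) ∣ powSumDes r n :=
  stmt12_general k r n hn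
end
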